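/- arXiv:2110.12015 — 3 statements merged into one kernel-verified Lean document; each statement's English description precedes it below -/
import Mathlib

section
/- Let {ρ_k} be a sequence of positive reals with ρ_k → +∞ and let x^k → x̄ ∈ F be a sequence such that ∇f(x^k) − Σ_{j=1}^q ρ_k Dg_j(x^k)ᵀ P_{Λ_{m_j}}(−g_j(x^k)) → 0. If weak-CPLD holds at x̄, then x̄ satisfies the KKT conditions. -/
open Filter Topology

noncomputable section

/-- Euclidean space `ℝ^k`. -/
abbrev Evec (k : ℕ) : Type := EuclideanSpace ℝ (Fin k)

/-- Membership of `y = (y₀, ŷ) ∈ ℝ × ℝ^p` in the second-order (Lorentz) cone `Λ_{1+p}`. -/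
def inSOC {p : ℕ} (y : ℝ × Evec p) : Prop := ‖y.2‖ ≤ y.1

/-- Normalization `v / ‖v‖`. -/
def unitv {p : ℕ} (v : Evec p) : Evec p := ‖v‖⁻¹ • v

/-- The transposed Jacobian `Dg(x)ᵀ u` of `g = (g0, gh) : ℝ^n → ℝ × ℝ^p` at `x`,
applied to `u = (u₀, û) ∈ ℝ × ℝ^p`. -/
def dgT {n p : ℕ} (g0 : Evec n → ℝ) (gh : Evec n → Evec p) (x : Evec n)
    (u : ℝ × Evec p) : Evec n :=
  u.1 • gradient g0 x + ∑ i, u.2 i • gradient (fun y => gh y i) x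

/-- Euclidean inner product on `ℝ × ℝ^p`. -/
def pairInner {p : ℕ} (u v : ℝ × Evec p) : ℝ := u.1 * v.1 + (inner ℝ u.2 v.2 : ℝ)

/-- Squared Euclidean norm on `ℝ × ℝ^p`. -/
def pairSq {p : ℕ} (y : ℝ × Evec p) : ℝ := y.1 ^ 2 + ‖y.2‖ ^ 2

/-- The Euclidean orthogonal projection onto the second-order cone
(expressed through the spectral decomposition). -/
def projSOC {p : ℕ} (y : ℝ × Evec p) : ℝ × Evec p :=
  ((max (y.1 - ‖y.2‖) 0 + max (y.1 + ‖y.2‖) 0) / 2,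
    ((max (y.1 + ‖y.2‖) 0 - max (y.1 - ‖y.2‖) 0) / (2 * ‖y.2‖)) • y.2)

/-- `j ∈ I₀(x)`, i.e. `g_j(x) = 0`. -/
def memI0 {n q : ℕ} {m : Fin q → ℕ} (g0 : Fin q → Evec n → ℝ)
    (gh : (j : Fin q) → Evec n → Evec (m j)) (x : Evec n) (j : Fin q) : Prop :=
  g0 j x = 0 ∧ gh j x = 0

/-- `j ∈ I_B(x)`, i.e. `g_j(x) ≠ 0` and `g_{j,0}(x) = ‖ĝ_j(x)‖`. -/
def memIB {n q : ℕ} {m : Fin q → ℕ} (g0 : Fin q → Evec n → ℝ)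
    (gh : (j : Fin q) → Evec n → Evec (m j)) (x : Evec n) (j : Fin q) : Prop :=
  ¬ (g0 j x = 0 ∧ gh j x = 0) ∧ g0 j x = ‖gh j x‖

/-- The linear combination, with coefficients `η, a, b`, of the family
`D_{J_B,J_-,J_+}(x, w)`: the vectors `Dg_j(x)ᵀ(1, -ĝ_j(x)/‖ĝ_j(x)‖)` (coefficients `η j`),
`Dg_j(x)ᵀ(1, -w j)` (coefficients `a j`) and `Dg_j(x)ᵀ(1, w j)` (coefficients `b j`). -/
def famComb {n q : ℕ} {m : Fin q → ℕ} (g0 : Fin q → Evec n → ℝ)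
    (gh : (j : Fin q) → Evec n → Evec (m j)) (x : Evec n)
    (w : (j : Fin q) → Evec (m j)) (η a b : Fin q → ℝ) : Evec n :=
  ∑ j, (η j • dgT (g0 j) (gh j) x (1, -unitv (gh j x))
      + a j • dgT (g0 j) (gh j) x (1, -(w j))
      + b j • dgT (g0 j) (gh j) x (1, w j))

/-- The family `D_{J_B,J_-,J_+}(x, w)` is linearly dependent. -/
def linDepD {n q : ℕ} {m : Fin q → ℕ} (g0 : Fin q → Evec n → ℝ)
    (gh : (j : Fin q) → Evec n → Evec (m j)) (JB Jm Jp : Fin q → Prop)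
    (x : Evec n) (w : (j : Fin q) → Evec (m j)) : Prop :=
  ∃ η a b : Fin q → ℝ,
    (∀ j, ¬ JB j → η j = 0) ∧ (∀ j, ¬ Jm j → a j = 0) ∧ (∀ j, ¬ Jp j → b j = 0) ∧
    ¬ (∀ j, η j = 0 ∧ a j = 0 ∧ b j = 0) ∧
    famComb g0 gh x w η a b = 0

/-- The family `D_{J_B,J_-,J_+}(x, w)` is positively linearly dependent. -/
def posLinDepD {n q : ℕ} {m : Fin q → ℕ} (g0 : Fin q → Evec n → ℝ)
    (gh : (j : Fin q) → Evec n → Evec (m j)) (JB Jm Jp : Fin q → Prop)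
    (x : Evec n) (w : (j : Fin q) → Evec (m j)) : Prop :=
  ∃ η a b : Fin q → ℝ,
    (∀ j, 0 ≤ η j) ∧ (∀ j, 0 ≤ a j) ∧ (∀ j, 0 ≤ b j) ∧
    (∀ j, ¬ JB j → η j = 0) ∧ (∀ j, ¬ Jm j → a j = 0) ∧ (∀ j, ¬ Jp j → b j = 0) ∧
    ¬ (∀ j, η j = 0 ∧ a j = 0 ∧ b j = 0) ∧
    famComb g0 gh x w η a b = 0

/-- The full family `{Dg_j(x)ᵀ u₁(g_j(x))}_{j ∈ I_B(x)} ∪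
`{Dg_j(x)ᵀ(1,-w j), Dg_j(x)ᵀ(1,w j)}_{j ∈ I₀(x)}` is linearly independent. -/
def famLinIndep {n q : ℕ} {m : Fin q → ℕ} (g0 : Fin q → Evec n → ℝ)
    (gh : (j : Fin q) → Evec n → Evec (m j)) (x : Evec n)
    (w : (j : Fin q) → Evec (m j)) : Prop :=
  ∀ η a b : Fin q → ℝ,
    (∀ j, ¬ memIB g0 gh x j → η j = 0) →
    (∀ j, ¬ memI0 g0 gh x j → a j = 0 ∧ b j = 0) →
    famComb g0 gh x w η a b = 0 →
    ∀ j, η j = 0 ∧ a j = 0 ∧ b j = 0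

/-- The full family is positively linearly independent. -/
def famPosLinIndep {n q : ℕ} {m : Fin q → ℕ} (g0 : Fin q → Evec n → ℝ)
    (gh : (j : Fin q) → Evec n → Evec (m j)) (x : Evec n)
    (w : (j : Fin q) → Evec (m j)) : Prop :=
  ∀ η a b : Fin q → ℝ,
    (∀ j, 0 ≤ η j) → (∀ j, 0 ≤ a j) → (∀ j, 0 ≤ b j) →
    (∀ j, ¬ memIB g0 gh x j → η j = 0) →
    (∀ j, ¬ memI0 g0 gh x j → a j = 0 ∧ b j = 0) →
    famComb g0 gh x w η a b = 0 →
    ∀ j, η j = 0 ∧ a j = 0 ∧ b j = 0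

/-- An admissible choice, along the (perturbed) sequence `x k + Δ`, of eigenvector
parameters `w k j` (for `k ∈ I`, `j ∈ I₀(xb)`) together with their limits `wb j`. -/
def eigParams {n q : ℕ} {m : Fin q → ℕ} (g0 : Fin q → Evec n → ℝ)
    (gh : (j : Fin q) → Evec n → Evec (m j)) (xb : Evec n) (x : ℕ → Evec n)
    (Δ : ℕ → (j : Fin q) → ℝ × Evec (m j)) (I : Set ℕ)
    (w : ℕ → (j : Fin q) → Evec (m j)) (wb : (j : Fin q) → Evec (m j)) : Prop :=
  (∀ k ∈ I, ∀ j, memI0 g0 gh xb j → ‖w k j‖ = 1 ∧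
      (gh j (x k) + (Δ k j).2 ≠ 0 → w k j = unitv (gh j (x k) + (Δ k j).2))) ∧
  (∀ j, memI0 g0 gh xb j → ‖wb j‖ = 1 ∧
      Tendsto (fun k => w k j) (atTop ⊓ 𝓟 I) (𝓝 (wb j)))

/-- Weak-nondegeneracy at `xb`. -/
def weakNondeg {n q : ℕ} {m : Fin q → ℕ} (g0 : Fin q → Evec n → ℝ)
    (gh : (j : Fin q) → Evec n → Evec (m j)) (xb : Evec n) : Prop :=
  ∀ x : ℕ → Evec n, Tendsto x atTop (𝓝 xb) →
    ∃ (I : Set ℕ) (w : ℕ → (j : Fin q) → Evec (m j)) (wb : (j : Fin q) → Evec (m j)),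
      I.Infinite ∧ eigParams g0 gh xb x (fun _ _ => 0) I w wb ∧
      famLinIndep g0 gh xb wb

/-- Weak-Robinson's CQ at `xb`. -/
def weakRobinson {n q : ℕ} {m : Fin q → ℕ} (g0 : Fin q → Evec n → ℝ)
    (gh : (j : Fin q) → Evec n → Evec (m j)) (xb : Evec n) : Prop :=
  ∀ x : ℕ → Evec n, Tendsto x atTop (𝓝 xb) →
    ∃ (I : Set ℕ) (w : ℕ → (j : Fin q) → Evec (m j)) (wb : (j : Fin q) → Evec (m j)),
      I.Infinite ∧ eigParams g0 gh xb x (fun _ _ => 0) I w wb ∧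
      famPosLinIndep g0 gh xb wb

/-- Weak-CRCQ at `xb`. -/
def weakCRCQ {n q : ℕ} {m : Fin q → ℕ} (g0 : Fin q → Evec n → ℝ)
    (gh : (j : Fin q) → Evec n → Evec (m j)) (xb : Evec n) : Prop :=
  ∀ x : ℕ → Evec n, Tendsto x atTop (𝓝 xb) →
    ∃ (I : Set ℕ) (w : ℕ → (j : Fin q) → Evec (m j)) (wb : (j : Fin q) → Evec (m j)),
      I.Infinite ∧ eigParams g0 gh xb x (fun _ _ => 0) I w wb ∧
      ∀ JB Jm Jp : Fin q → Prop,
        (∀ j, JB j → memIB g0 gh xb j) → (∀ j, Jm j → memI0 g0 gh xb j) →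
        (∀ j, Jp j → memI0 g0 gh xb j) →
        linDepD g0 gh JB Jm Jp xb wb →
        ∀ᶠ k in atTop ⊓ 𝓟 I, linDepD g0 gh JB Jm Jp (x k) (w k)

/-- Weak-CPLD at `xb`. -/
def weakCPLD {n q : ℕ} {m : Fin q → ℕ} (g0 : Fin q → Evec n → ℝ)
    (gh : (j : Fin q) → Evec n → Evec (m j)) (xb : Evec n) : Prop :=
  ∀ x : ℕ → Evec n, Tendsto x atTop (𝓝 xb) →
    ∃ (I : Set ℕ) (w : ℕ → (j : Fin q) → Evec (m j)) (wb : (j : Fin q) → Evec (m j)),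
      I.Infinite ∧ eigParams g0 gh xb x (fun _ _ => 0) I w wb ∧
      ∀ JB Jm Jp : Fin q → Prop,
        (∀ j, JB j → memIB g0 gh xb j) → (∀ j, Jm j → memI0 g0 gh xb j) →
        (∀ j, Jp j → memI0 g0 gh xb j) →
        posLinDepD g0 gh JB Jm Jp xb wb →
        ∀ᶠ k in atTop ⊓ 𝓟 I, linDepD g0 gh JB Jm Jp (x k) (w k)

/-- Seq-CRCQ at `xb`. -/
def seqCRCQ {n q : ℕ} {m : Fin q → ℕ} (g0 : Fin q → Evec n → ℝ)
    (gh : (j : Fin q) → Evec n → Evec (m j)) (xb : Evec n) : Prop :=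
  ∀ (x : ℕ → Evec n) (Δ : ℕ → (j : Fin q) → ℝ × Evec (m j)),
    Tendsto x atTop (𝓝 xb) →
    (∀ j, memI0 g0 gh xb j ∨ memIB g0 gh xb j → Tendsto (fun k => Δ k j) atTop (𝓝 0)) →
    ∃ (I : Set ℕ) (w : ℕ → (j : Fin q) → Evec (m j)) (wb : (j : Fin q) → Evec (m j)),
      I.Infinite ∧ eigParams g0 gh xb x Δ I w wb ∧
      ∀ JB Jm Jp : Fin q → Prop,
        (∀ j, JB j → memIB g0 gh xb j) → (∀ j, Jm j → memI0 g0 gh xb j) →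
        (∀ j, Jp j → memI0 g0 gh xb j) →
        linDepD g0 gh JB Jm Jp xb wb →
        ∀ᶠ k in atTop ⊓ 𝓟 I, linDepD g0 gh JB Jm Jp (x k) (w k)

/-- Seq-CPLD at `xb`. -/
def seqCPLD {n q : ℕ} {m : Fin q → ℕ} (g0 : Fin q → Evec n → ℝ)
    (gh : (j : Fin q) → Evec n → Evec (m j)) (xb : Evec n) : Prop :=
  ∀ (x : ℕ → Evec n) (Δ : ℕ → (j : Fin q) → ℝ × Evec (m j)),
    Tendsto x atTop (𝓝 xb) →
    (∀ j, memI0 g0 gh xb j ∨ memIB g0 gh xb j → Tendsto (fun k => Δ k j) atTop (𝓝 0)) →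
    ∃ (I : Set ℕ) (w : ℕ → (j : Fin q) → Evec (m j)) (wb : (j : Fin q) → Evec (m j)),
      I.Infinite ∧ eigParams g0 gh xb x Δ I w wb ∧
      ∀ JB Jm Jp : Fin q → Prop,
        (∀ j, JB j → memIB g0 gh xb j) → (∀ j, Jm j → memI0 g0 gh xb j) →
        (∀ j, Jp j → memI0 g0 gh xb j) →
        posLinDepD g0 gh JB Jm Jp xb wb →
        ∀ᶠ k in atTop ⊓ 𝓟 I, linDepD g0 gh JB Jm Jp (x k) (w k)

/-- The linear combination appearing in the definitions of nondegeneracy and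
Robinson's CQ: `Σ_{j} (η j • Dg_j(x)ᵀ(g_{j,0}(x), -ĝ_j(x)) + Dg_j(x)ᵀ (y j))`. -/
def ndgComb {n q : ℕ} {m : Fin q → ℕ} (g0 : Fin q → Evec n → ℝ)
    (gh : (j : Fin q) → Evec n → Evec (m j)) (x : Evec n)
    (η : Fin q → ℝ) (y : (j : Fin q) → ℝ × Evec (m j)) : Evec n :=
  ∑ j, (η j • dgT (g0 j) (gh j) x (g0 j x, -(gh j x)) + dgT (g0 j) (gh j) x (y j))

/-- Nondegeneracy at `xb`. -/
def Nondegenerate {n q : ℕ} {m : Fin q → ℕ} (g0 : Fin q → Evec n → ℝ)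
    (gh : (j : Fin q) → Evec n → Evec (m j)) (xb : Evec n) : Prop :=
  ∀ (η : Fin q → ℝ) (y : (j : Fin q) → ℝ × Evec (m j)),
    (∀ j, ¬ memIB g0 gh xb j → η j = 0) →
    (∀ j, ¬ memI0 g0 gh xb j → y j = 0) →
    ndgComb g0 gh xb η y = 0 →
    (∀ j, η j = 0) ∧ (∀ j, y j = 0)

/-- Robinson's CQ at `xb`. -/
def RobinsonCQ {n q : ℕ} {m : Fin q → ℕ} (g0 : Fin q → Evec n → ℝ)
    (gh : (j : Fin q) → Evec n → Evec (m j)) (xb : Evec n) : Prop :=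
  ∀ (η : Fin q → ℝ) (y : (j : Fin q) → ℝ × Evec (m j)),
    (∀ j, 0 ≤ η j) → (∀ j, inSOC (y j)) →
    (∀ j, ¬ memIB g0 gh xb j → η j = 0) →
    (∀ j, ¬ memI0 g0 gh xb j → y j = 0) →
    ndgComb g0 gh xb η y = 0 →
    (∀ j, η j = 0) ∧ (∀ j, y j = 0)

/-- The KKT conditions at `xb` for objective `f`. -/
def isKKT {n q : ℕ} {m : Fin q → ℕ} (f : Evec n → ℝ) (g0 : Fin q → Evec n → ℝ)
    (gh : (j : Fin q) → Evec n → Evec (m j)) (xb : Evec n) : Prop :=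
  ∃ μ : (j : Fin q) → ℝ × Evec (m j),
    (∀ j, inSOC (μ j)) ∧
    gradient f xb = ∑ j, dgT (g0 j) (gh j) xb (μ j) ∧
    ∀ j, pairInner (μ j) (g0 j xb, gh j xb) = 0

/-- The metric subregularity CQ (MSCQ) at `xb`, with Euclidean distances. -/
def MSCQat {n q : ℕ} {m : Fin q → ℕ} (g0 : Fin q → Evec n → ℝ)
    (gh : (j : Fin q) → Evec n → Evec (m j)) (xb : Evec n) : Prop :=
  ∃ γ > (0:ℝ), ∃ ε > (0:ℝ), ∀ x : Evec n, ‖x - xb‖ < ε →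
    Metric.infDist x {z : Evec n | ∀ j, ‖gh j z‖ ≤ g0 j z} ≤
      γ * sInf {d : ℝ | ∃ z : (j : Fin q) → ℝ × Evec (m j),
        (∀ j, inSOC (z j)) ∧
        d = Real.sqrt (∑ j, ((g0 j x - (z j).1) ^ 2 + ‖gh j x - (z j).2‖ ^ 2))}

section Aux

variable {n p : ℕ}

lemma dgT_smul (g0 : Evec n → ℝ) (gh : Evec n → Evec p) (x : Evec n) (c : ℝ) (u : ℝ × Evec p) :
    dgT g0 gh x (c • u) = c • dgT g0 gh x u := by
  simp only [dgT, Prod.smul_fst, Prod.smul_snd, smul_eq_mul]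
  rw [smul_add, Finset.smul_sum, mul_smul]
  congr 1
  refine Finset.sum_congr rfl fun i _ => ?_
  have : (c • u.2) i = c * u.2 i := rfl
  rw [this, mul_smul]

lemma dgT_add (g0 : Evec n → ℝ) (gh : Evec n → Evec p) (x : Evec n) (u v : ℝ × Evec p) :
    dgT g0 gh x (u + v) = dgT g0 gh x u + dgT g0 gh x v := by
  simp only [dgT, Prod.fst_add, Prod.snd_add]
  rw [add_smul]
  have : ∀ i ∈ Finset.univ, ((u.2 + v.2) i) • gradient (fun y => gh y i) x
      = u.2 i • gradient (fun y => gh y i) x + v.2 i • gradient (fun y => gh y i) x := by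
    intro i _
    have h : (u.2 + v.2) i = u.2 i + v.2 i := rfl
    rw [h, add_smul]
  rw [Finset.sum_congr rfl this, Finset.sum_add_distrib]
  abel

lemma dgT_zero (g0 : Evec n → ℝ) (gh : Evec n → Evec p) (x : Evec n) :
    dgT g0 gh x 0 = 0 := by
  have : ∀ i ∈ Finset.univ, ((0 : ℝ × Evec p).2 i) • gradient (fun y => gh y i) x = 0 := by
    intro i _
    have h : (0 : ℝ × Evec p).2 i = 0 := rfl
    rw [h, zero_smul]
  simp [dgT, Finset.sum_congr rfl this]

lemma contGrad {h : Evec n → ℝ} (hh : ContDiff ℝ 1 h) : Continuous (gradient h) := by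
  have h1 : Continuous fun x => fderiv ℝ h x := hh.continuous_fderiv one_ne_zero
  have : (gradient h) = fun x => (InnerProductSpace.toDual ℝ (Evec n)).symm (fderiv ℝ h x) := rfl
  rw [this]
  exact (InnerProductSpace.toDual ℝ (Evec n)).symm.continuous.comp h1

lemma norm_unitv {v : Evec p} (hv : v ≠ 0) : ‖unitv v‖ = 1 := by
  rw [unitv, norm_smul]
  simp [norm_norm, inv_mul_cancel₀ (norm_ne_zero_iff.mpr hv)]

lemma proj_nonpos (y : ℝ × Evec p) (h1 : y.1 + ‖y.2‖ ≤ 0) : projSOC y = 0 := by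
  have h2 : y.1 - ‖y.2‖ ≤ 0 := by nlinarith [norm_nonneg y.2]
  rw [projSOC, max_eq_right h1, max_eq_right h2]
  simp [Prod.ext_iff]

lemma proj_decomp (y : ℝ × Evec p) (hy : y.2 ≠ 0) :
    projSOC y = (max (y.1 - ‖y.2‖) 0 / 2) • ((1:ℝ), -unitv y.2)
      + (max (y.1 + ‖y.2‖) 0 / 2) • ((1:ℝ), unitv y.2) := by
  have hn : ‖y.2‖ ≠ 0 := norm_ne_zero_iff.mpr hy
  set A := max (y.1 - ‖y.2‖) 0
  set B := max (y.1 + ‖y.2‖) 0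
  rw [projSOC, Prod.ext_iff]
  constructor
  · simp [Prod.smul_fst]; ring
  · show ((B - A) / (2 * ‖y.2‖)) • y.2 = ((A/2) • (-unitv y.2) + (B/2) • unitv y.2)
    rw [unitv, smul_neg, smul_smul, smul_smul, ← neg_smul, ← add_smul]
    congr 1
    field_simp
    ring

lemma proj_zero2 (y : ℝ × Evec p) (hy : y.2 = 0) : projSOC y = (max y.1 0, 0) := by
  rw [projSOC, Prod.ext_iff]
  constructor
  · simp [hy]
  · simp [hy]

end Aux
section Carath

variable {ι : Type*} [Fintype ι] {V : Type*} [AddCommGroup V] [Module ℝ V]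

open Classical in
lemma carath_aux (N : ℕ) : ∀ (d : ι → V) (c : ι → ℝ), (∀ i, 0 ≤ c i) →
    (Finset.univ.filter (fun i => c i ≠ 0)).card ≤ N →
    ∃ c' : ι → ℝ, (∀ i, 0 ≤ c' i) ∧ (∀ i, c' i ≠ 0 → c i ≠ 0) ∧
      (∑ i, c' i • d i) = (∑ i, c i • d i) ∧
      LinearIndependent ℝ (fun t : {i // c' i ≠ 0} => d t.1) := by
  induction N with
  | zero =>
    intro d c hc hcard
    have hz : ∀ i, c i = 0 := by
      intro i
      by_contra hi
      have hmem : i ∈ Finset.univ.filter (fun i => c i ≠ 0) := by simp [hi]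
      have := Finset.card_pos.mpr ⟨i, hmem⟩
      omega
    refine ⟨c, hc, fun i hi => hi, rfl, ?_⟩
    have : IsEmpty {i // c i ≠ 0} := ⟨fun t => t.2 (hz t.1)⟩
    exact linearIndependent_empty_type
  | succ N ih =>
    intro d c hc hcard
    by_cases hli : LinearIndependent ℝ (fun t : {i // c i ≠ 0} => d t.1)
    · exact ⟨c, hc, fun i hi => hi, rfl, hli⟩
    obtain ⟨g, hg0, t0, hgt0⟩ := Fintype.not_linearIndependent_iff.mp hli
    set lam : ι → ℝ := fun i => if h : c i ≠ 0 then g ⟨i, h⟩ else 0 with hlam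
    have hlamsupp : ∀ i, lam i ≠ 0 → c i ≠ 0 := by
      intro i hi
      by_contra h
      exact hi (by simp [hlam, h])
    have hlamsum : ∑ i, lam i • d i = 0 := by
      rw [← hg0]
      rw [← Finset.sum_filter_of_ne (p := fun i => c i ≠ 0)
        (fun i _ hne => hlamsupp i (by intro h; exact hne (by rw [h, zero_smul])))]
      rw [Finset.sum_subtype (p := fun i => c i ≠ 0) (Finset.univ.filter (fun i => c i ≠ 0))
        (by intro i; simp) (fun i => lam i • d i)]
      refine Finset.sum_congr rfl fun t _ => ?_
      simp [hlam, t.2]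
    have hlamne : ∃ i, lam i ≠ 0 := ⟨t0.1, by simpa [hlam, t0.2] using hgt0⟩
    obtain ⟨mu, hmusupp, hmusum, i1, hi1⟩ :
        ∃ mu : ι → ℝ, (∀ i, mu i ≠ 0 → c i ≠ 0) ∧ (∑ i, mu i • d i = 0) ∧ ∃ i, 0 < mu i := by
      by_cases hpos : ∃ i, 0 < lam i
      · exact ⟨lam, hlamsupp, hlamsum, hpos⟩
      · push_neg at hpos
        obtain ⟨i, hi⟩ := hlamne
        refine ⟨-lam, fun i h => hlamsupp i (by simpa using h), ?_, ⟨i, ?_⟩⟩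
        · simp only [Pi.neg_apply, neg_smul, Finset.sum_neg_distrib, hlamsum, neg_zero]
        · have h := hpos i
          simp only [Pi.neg_apply]
          rcases lt_or_eq_of_le h with h' | h'
          · linarith
          · exact absurd h' hi
    set s := Finset.univ.filter (fun i => 0 < mu i) with hs
    have hsne : s.Nonempty := ⟨i1, by simp [hs, hi1]⟩
    set θ := s.inf' hsne (fun i => c i / mu i) with hθ
    have hθ0 : 0 ≤ θ := by
      rw [hθ]
      apply Finset.le_inf'
      intro i hi
      have hmi : 0 < mu i := by simpa [hs] using hi
      exact div_nonneg (hc i) hmi.le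
    obtain ⟨i0, hi0s, hi0⟩ := Finset.exists_mem_eq_inf' hsne (fun i => c i / mu i)
    have hmui0 : 0 < mu i0 := by simpa [hs] using hi0s
    set c2 : ι → ℝ := fun i => c i - θ * mu i with hc2
    have hc2nn : ∀ i, 0 ≤ c2 i := by
      intro i
      rcases le_or_gt (mu i) 0 with h | h
      · have hm : θ * mu i ≤ 0 := mul_nonpos_of_nonneg_of_nonpos hθ0 h
        have := hc i
        simp only [hc2]
        linarith
      · have hle : θ ≤ c i / mu i := by
          rw [hθ]
          exact Finset.inf'_le _ (by simp [hs, h])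
        have := (le_div_iff₀ h).mp hle
        simp only [hc2]
        linarith
    have hc2supp : ∀ i, c2 i ≠ 0 → c i ≠ 0 := by
      intro i hi hci
      have hmu : mu i = 0 := by
        by_contra hmu
        exact (hmusupp i hmu) hci
      apply hi
      simp [hc2, hci, hmu]
    have hc2sum : ∑ i, c2 i • d i = ∑ i, c i • d i := by
      have hterm : ∀ i ∈ Finset.univ, c2 i • d i = c i • d i - θ • (mu i • d i) := by
        intro i _
        simp only [hc2]
        rw [sub_smul, mul_smul]
      rw [Finset.sum_congr rfl hterm, Finset.sum_sub_distrib, ← Finset.smul_sum, hmusum,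
        smul_zero, sub_zero]
    have hc2i0 : c2 i0 = 0 := by
      simp only [hc2]
      rw [hθ, hi0]
      field_simp
      ring
    have hci0 : c i0 ≠ 0 := hmusupp i0 (ne_of_gt hmui0)
    have hss : Finset.univ.filter (fun i => c2 i ≠ 0) ⊂ Finset.univ.filter (fun i => c i ≠ 0) := by
      rw [Finset.ssubset_iff_of_subset (fun i hi => by
        simp only [Finset.mem_filter, Finset.mem_univ, true_and] at hi ⊢
        exact hc2supp i hi)]
      exact ⟨i0, by simp [hci0], by simp [hc2i0]⟩
    have hcard2 : (Finset.univ.filter (fun i => c2 i ≠ 0)).card ≤ N := by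
      have := Finset.card_lt_card hss
      omega
    obtain ⟨c', h1, h2, h3, h4⟩ := ih d c2 hc2nn hcard2
    exact ⟨c', h1, fun i hi => hc2supp i (h2 i hi), h3.trans hc2sum, h4⟩

lemma caratheodory_cone (d : ι → V) (c : ι → ℝ) (hc : ∀ i, 0 ≤ c i) :
    ∃ c' : ι → ℝ, (∀ i, 0 ≤ c' i) ∧ (∀ i, c' i ≠ 0 → c i ≠ 0) ∧
      (∑ i, c' i • d i) = (∑ i, c i • d i) ∧
      LinearIndependent ℝ (fun t : {i // c' i ≠ 0} => d t.1) := by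
  classical
  exact carath_aux _ d c hc le_rfl

end Carath
section Fam

variable {n q : ℕ} {m : Fin q → ℕ}

abbrev TIdx (q : ℕ) := Fin q ⊕ (Fin q ⊕ Fin q)

def pack {q : ℕ} (η a b : Fin q → ℝ) : TIdx q → ℝ := Sum.elim η (Sum.elim a b)

def dict (g0 : Fin q → Evec n → ℝ) (gh : (j : Fin q) → Evec n → Evec (m j))
    (x : Evec n) (w : (j : Fin q) → Evec (m j)) : TIdx q → Evec n :=
  Sum.elim (fun j => dgT (g0 j) (gh j) x (1, -unitv (gh j x)))
    (Sum.elim (fun j => dgT (g0 j) (gh j) x (1, -(w j))) (fun j => dgT (g0 j) (gh j) x (1, w j)))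

lemma famComb_eq_sum (g0 : Fin q → Evec n → ℝ) (gh : (j : Fin q) → Evec n → Evec (m j))
    (x : Evec n) (w : (j : Fin q) → Evec (m j)) (η a b : Fin q → ℝ) :
    famComb g0 gh x w η a b = ∑ s : TIdx q, pack η a b s • dict g0 gh x w s := by
  rw [famComb, Fintype.sum_sum_type, Fintype.sum_sum_type]
  simp only [pack, dict, Sum.elim_inl, Sum.elim_inr]
  rw [Finset.sum_add_distrib, Finset.sum_add_distrib]
  abel

lemma tendsto_dgT {p : ℕ} {g0 : Evec n → ℝ} {gh : Evec n → Evec p}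
    (h0 : ContDiff ℝ 1 g0) (hh : ∀ i, ContDiff ℝ 1 (fun x => gh x i))
    {z : ℕ → Evec n} {zb : Evec n} (hz : Tendsto z atTop (𝓝 zb))
    {v : ℕ → Evec p} {vb : Evec p} (hv : Tendsto v atTop (𝓝 vb)) (c : ℝ) :
    Tendsto (fun k => dgT g0 gh (z k) (c, v k)) atTop (𝓝 (dgT g0 gh zb (c, vb))) := by
  simp only [dgT]
  apply Tendsto.add
  · exact (((contGrad h0).tendsto zb).comp hz).const_smul c
  · apply tendsto_finset_sum
    intro i _
    apply Tendsto.smul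
    · exact ((EuclideanSpace.proj (𝕜 := ℝ) i).continuous.tendsto vb).comp hv
    · exact ((contGrad (hh i)).tendsto zb).comp hz

lemma tendsto_sum_smul {ι : Type*} [Fintype ι] {E : Type*} [NormedAddCommGroup E]
    [NormedSpace ℝ E] {c : ℕ → ι → ℝ} {cb : ι → ℝ} {d : ℕ → ι → E} {db : ι → E}
    (hc : Tendsto c atTop (𝓝 cb))
    (hd : ∀ s, (∀ k, c k s = 0) ∨ Tendsto (fun k => d k s) atTop (𝓝 (db s))) :
    Tendsto (fun k => ∑ s, c k s • d k s) atTop (𝓝 (∑ s, cb s • db s)) := by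
  apply tendsto_finset_sum
  intro s _
  have hcs : Tendsto (fun k => c k s) atTop (𝓝 (cb s)) :=
    ((continuous_apply s).tendsto cb).comp hc
  rcases hd s with h | h
  · have hcb : cb s = 0 := by
      have : Tendsto (fun k => c k s) atTop (𝓝 0) := by
        simpa [h] using tendsto_const_nhds (x := (0:ℝ)) (f := atTop (α := ℕ))
      exact tendsto_nhds_unique hcs this
    have : (fun k => c k s • d k s) = fun _ => (0 : E) := by
      funext k; simp [h k]
    rw [this, hcb, zero_smul]
    exact tendsto_const_nhds
  · exact hcs.smul h

lemma exists_subseq_tendsto_atTop {N : ℕ → ℝ} (h : ¬ BddAbove (Set.range N)) :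
    ∃ σ : ℕ → ℕ, StrictMono σ ∧ Tendsto (fun t => N (σ t)) atTop atTop := by
  have hfreq : ∀ M : ℕ, ∃ᶠ k in atTop, (M : ℝ) < N k := by
    intro M
    rw [Filter.frequently_atTop]
    intro K
    by_contra hcon
    push_neg at hcon
    apply h
    refine ⟨max (M : ℝ) ((Finset.range (K+1)).sup' (by simp) N), ?_⟩
    rintro y ⟨k, rfl⟩
    rcases le_or_gt K k with hk | hk
    · exact le_max_of_le_left (hcon k hk)
    · exact le_max_of_le_right (Finset.le_sup' N (by simp; omega))
  obtain ⟨σ, hσ, hσ2⟩ := Filter.extraction_forall_of_frequently hfreq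
  refine ⟨σ, hσ, ?_⟩
  exact tendsto_atTop_mono (fun t => (hσ2 t).le) tendsto_natCast_atTop_atTop

end Fam
section Aux4
variable {n p : ℕ}

lemma dgT_fst (g0 : Evec n → ℝ) (gh : Evec n → Evec p) (x : Evec n) (A : ℝ) :
    dgT g0 gh x (A, (0 : Evec p)) = A • gradient g0 x := by
  rw [dgT]
  have : ∀ i ∈ Finset.univ, ((A, (0:Evec p)).2 i) • gradient (fun y => gh y i) x = 0 := by
    intro i _
    have h : ((A, (0:Evec p)).2) i = 0 := rfl
    rw [h, zero_smul]
  rw [Finset.sum_congr rfl this]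
  simp

lemma unitv_neg (v : Evec p) : unitv (-v) = -unitv v := by
  simp [unitv, norm_neg]

lemma pair_one_add (w : Evec p) : ((1:ℝ), -w) + ((1:ℝ), w) = ((2:ℝ), (0:Evec p)) := by
  rw [Prod.mk_add_mk]
  norm_num

end Aux4
set_option maxHeartbeats 1600000 in
/-- If `ρ k → +∞` are positive, `x k → xb ∈ F` is such that
`∇f(x k) - Σ_j ρ k • Dg_j(x k)ᵀ P_{Λ_{m_j}}(-g_j(x k)) → 0`, and weak-CPLD holds at `xb`,
then `xb` satisfies the KKT conditions. -/
theorem stmt9 {n q : ℕ} (m : Fin q → ℕ) (hm : ∀ j, 1 ≤ m j)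
    (f : Evec n → ℝ) (hf : ContDiff ℝ 1 f)
    (g0 : Fin q → Evec n → ℝ) (gh : (j : Fin q) → Evec n → Evec (m j))
    (hg : ∀ j, ContDiff ℝ 1 fun x => (g0 j x, gh j x))
    (xb : Evec n) (hxb : ∀ j, ‖gh j xb‖ ≤ g0 j xb)
    (ρ : ℕ → ℝ) (hρpos : ∀ k, 0 < ρ k) (hρ : Tendsto ρ atTop atTop)
    (x : ℕ → Evec n) (hx : Tendsto x atTop (𝓝 xb))
    (hstat : Tendsto (fun k => gradient f (x k) -
        ∑ j, ρ k • dgT (g0 j) (gh j) (x k)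
          (projSOC (-(g0 j (x k)), -(gh j (x k))))) atTop (𝓝 0))
    (hcpld : weakCPLD g0 gh xb) :
    isKKT f g0 gh xb := by
  classical
  -- smoothness of components
  have hg0c : ∀ j, ContDiff ℝ 1 (g0 j) := fun j => contDiff_fst.comp (hg j)
  have hghc : ∀ j i, ContDiff ℝ 1 (fun y => gh j y i) := fun j i =>
    (EuclideanSpace.proj (𝕜 := ℝ) i).contDiff.comp (contDiff_snd.comp (hg j))
  have hghcont : ∀ j, Continuous (gh j) := fun j => (contDiff_snd.comp (hg j)).continuous
  have hg0cont : ∀ j, Continuous (g0 j) := fun j => (hg0c j).continuous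
  -- weak-CPLD data
  obtain ⟨I, w, wb, hIinf, ⟨hwk, hwb⟩, hcp⟩ := hcpld x hx
  -- enumeration of I
  set φ : ℕ → ℕ := Nat.nth (· ∈ I) with hφdef
  have hIinf' : (setOf (· ∈ I)).Infinite := hIinf
  have hφmono : StrictMono φ := Nat.nth_strictMono hIinf'
  have hφmem : ∀ k, φ k ∈ I := fun k => Nat.nth_mem_of_infinite hIinf' k
  have hφtend : Tendsto φ atTop atTop := hφmono.tendsto_atTop
  -- index set trichotomy facts
  have hdisj : ∀ j, memI0 g0 gh xb j → ¬ memIB g0 gh xb j := by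
    intro j h0 hB
    exact hB.1 ⟨h0.1, h0.2⟩
  have hIBne : ∀ j, memIB g0 gh xb j → gh j xb ≠ 0 := by
    intro j hB hz
    exact hB.1 ⟨by rw [hB.2, hz, norm_zero], hz⟩
  have hIBpos : ∀ j, memIB g0 gh xb j → 0 < g0 j xb := by
    intro j hB
    rw [hB.2]
    exact norm_pos_iff.mpr (hIBne j hB)
  have hint : ∀ j, ¬ memI0 g0 gh xb j → ¬ memIB g0 gh xb j → ‖gh j xb‖ < g0 j xb := by
    intro j h0 hB
    rcases lt_or_eq_of_le (hxb j) with h | h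
    · exact h
    · exact absurd ⟨h0, h.symm⟩ hB
  -- the allowed slots
  set allowed : TIdx q → Prop := Sum.elim (memIB g0 gh xb)
    (Sum.elim (memI0 g0 gh xb) (memI0 g0 gh xb)) with hallowed
  -- coefficients and dictionaries along φ
  set C : ℕ → TIdx q → ℝ := fun k => pack
      (fun j => if memIB g0 gh xb j then
        ρ (φ k) * max (-(g0 j (x (φ k))) + ‖gh j (x (φ k))‖) 0 / 2 else 0)
      (fun j => if memI0 g0 gh xb j then
        ρ (φ k) * max (-(g0 j (x (φ k))) + ‖gh j (x (φ k))‖) 0 / 2 else 0)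
      (fun j => if memI0 g0 gh xb j then
        ρ (φ k) * max (-(g0 j (x (φ k))) - ‖gh j (x (φ k))‖) 0 / 2 else 0) with hC
  set D : ℕ → TIdx q → Evec n := fun k => dict g0 gh (x (φ k)) (w (φ k)) with hD
  set Dbar : TIdx q → Evec n := dict g0 gh xb wb with hDbar
  have hCnn : ∀ k s, 0 ≤ C k s := by
    intro k s
    have hρk := (hρpos (φ k)).le
    rcases s with j | j | j <;>
      · simp only [hC, pack, Sum.elim_inl, Sum.elim_inr]
        split
        · positivity
        · exact le_refl 0
  have hCdis : ∀ k s, ¬ allowed s → C k s = 0 := by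
    intro k s hs
    rcases s with j | j | j <;>
      simp only [hallowed, Sum.elim_inl, Sum.elim_inr] at hs <;>
      simp [hC, pack, hs]
  -- eventual representation
  have hjrep : ∀ j : Fin q, ∀ᶠ k in atTop,
      ρ (φ k) • dgT (g0 j) (gh j) (x (φ k))
          (projSOC (-(g0 j (x (φ k))), -(gh j (x (φ k)))))
        = C k (Sum.inl j) • D k (Sum.inl j)
          + C k (Sum.inr (Sum.inl j)) • D k (Sum.inr (Sum.inl j))
          + C k (Sum.inr (Sum.inr j)) • D k (Sum.inr (Sum.inr j)) := by
    intro j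
    by_cases hj0 : memI0 g0 gh xb j
    · -- j ∈ I₀
      have hjB : ¬ memIB g0 gh xb j := hdisj j hj0
      apply Eventually.of_forall
      intro k
      have hC1 : C k (Sum.inl j) = 0 := by simp [hC, pack, hjB]
      have hCa : C k (Sum.inr (Sum.inl j))
          = ρ (φ k) * max (-(g0 j (x (φ k))) + ‖gh j (x (φ k))‖) 0 / 2 := by
        simp [hC, pack, hj0]
      have hCb : C k (Sum.inr (Sum.inr j))
          = ρ (φ k) * max (-(g0 j (x (φ k))) - ‖gh j (x (φ k))‖) 0 / 2 := by
        simp [hC, pack, hj0]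
      have hDa : D k (Sum.inr (Sum.inl j))
          = dgT (g0 j) (gh j) (x (φ k)) (1, -(w (φ k) j)) := rfl
      have hDb : D k (Sum.inr (Sum.inr j))
          = dgT (g0 j) (gh j) (x (φ k)) (1, (w (φ k) j)) := rfl
      rw [hC1, zero_smul, zero_add, hCa, hCb, hDa, hDb]
      by_cases hgz : gh j (x (φ k)) = 0
      · have hp : projSOC (-(g0 j (x (φ k))), -(gh j (x (φ k))))
            = ((max (-(g0 j (x (φ k)))) 0 : ℝ), (0 : Evec (m j))) := by
          rw [proj_zero2 _ (by simp [hgz])]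
        rw [hp, dgT_fst, hgz, norm_zero]
        have h2 : dgT (g0 j) (gh j) (x (φ k)) ((1:ℝ), -(w (φ k) j))
              + dgT (g0 j) (gh j) (x (φ k)) ((1:ℝ), w (φ k) j)
            = (2:ℝ) • gradient (g0 j) (x (φ k)) := by
          rw [← dgT_add, pair_one_add]
          exact dgT_fst _ _ _ 2
        simp only [add_zero, sub_zero]
        rw [smul_smul, ← smul_add, h2, smul_smul]
        congr 1
        ring
      · have hw : w (φ k) j = unitv (gh j (x (φ k))) := by
          have h := (hwk (φ k) (hφmem k) j hj0).2
          simp only [Prod.snd_zero, add_zero] at h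
          exact h hgz
        have hy2 : (-(g0 j (x (φ k))), -(gh j (x (φ k)))).2 ≠ 0 := by simpa using hgz
        rw [proj_decomp _ hy2]
        simp only [norm_neg, unitv_neg, neg_neg]
        rw [dgT_add, dgT_smul, dgT_smul, hw]
        rw [smul_add, smul_smul, smul_smul]
        rw [add_comm]
        congr 1 <;> · congr 1; ring
    by_cases hjB : memIB g0 gh xb j
    · -- j ∈ I_B
      have hne : gh j xb ≠ 0 := hIBne j hjB
      have hght : Tendsto (fun k => gh j (x (φ k))) atTop (𝓝 (gh j xb)) :=
        ((hghcont j).tendsto xb).comp (hx.comp hφtend)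
      have hg0t : Tendsto (fun k => g0 j (x (φ k))) atTop (𝓝 (g0 j xb)) :=
        ((hg0cont j).tendsto xb).comp (hx.comp hφtend)
      have hev1 : ∀ᶠ k in atTop, gh j (x (φ k)) ≠ 0 := hght.eventually_ne hne
      have hev2 : ∀ᶠ k in atTop, -(g0 j (x (φ k))) - ‖gh j (x (φ k))‖ ≤ 0 := by
        have hlim : Tendsto (fun k => -(g0 j (x (φ k))) - ‖gh j (x (φ k))‖) atTop
            (𝓝 (-(g0 j xb) - ‖gh j xb‖)) := (hg0t.neg).sub hght.norm
        have hlt : -(g0 j xb) - ‖gh j xb‖ < 0 := by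
          have h1 := hIBpos j hjB
          have h2 := norm_nonneg (gh j xb)
          linarith
        exact hlim.eventually (eventually_le_nhds hlt)
      filter_upwards [hev1, hev2] with k h1 h2
      have hCa : C k (Sum.inr (Sum.inl j)) = 0 := by simp [hC, pack, hj0]
      have hCb : C k (Sum.inr (Sum.inr j)) = 0 := by simp [hC, pack, hj0]
      have hC1 : C k (Sum.inl j)
          = ρ (φ k) * max (-(g0 j (x (φ k))) + ‖gh j (x (φ k))‖) 0 / 2 := by
        simp [hC, pack, hjB]
      have hD1 : D k (Sum.inl j)
          = dgT (g0 j) (gh j) (x (φ k)) (1, -unitv (gh j (x (φ k)))) := rfl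
      rw [hCa, hCb, zero_smul, zero_smul, add_zero, add_zero, hC1, hD1]
      rw [proj_decomp _ (by simpa using h1)]
      simp only [norm_neg, unitv_neg, neg_neg]
      rw [max_eq_right h2]
      rw [zero_div, zero_smul, zero_add]
      rw [dgT_smul, smul_smul]
      congr 1
      ring
    · -- interior
      have hlt := hint j hj0 hjB
      have hev : ∀ᶠ k in atTop, -(g0 j (x (φ k))) + ‖gh j (x (φ k))‖ ≤ 0 := by
        have hght : Tendsto (fun k => gh j (x (φ k))) atTop (𝓝 (gh j xb)) :=
          ((hghcont j).tendsto xb).comp (hx.comp hφtend)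
        have hg0t : Tendsto (fun k => g0 j (x (φ k))) atTop (𝓝 (g0 j xb)) :=
          ((hg0cont j).tendsto xb).comp (hx.comp hφtend)
        have hlim : Tendsto (fun k => -(g0 j (x (φ k))) + ‖gh j (x (φ k))‖) atTop
            (𝓝 (-(g0 j xb) + ‖gh j xb‖)) := (hg0t.neg).add hght.norm
        have hlt2 : -(g0 j xb) + ‖gh j xb‖ < 0 := by linarith
        exact hlim.eventually (eventually_le_nhds hlt2)
      filter_upwards [hev] with k h1
      have hp : projSOC (-(g0 j (x (φ k))), -(gh j (x (φ k)))) = 0 :=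
        proj_nonpos _ (by simpa [norm_neg] using h1)
      rw [hp, dgT_zero, smul_zero]
      have hCa : C k (Sum.inr (Sum.inl j)) = 0 := by simp [hC, pack, hj0]
      have hCb : C k (Sum.inr (Sum.inr j)) = 0 := by simp [hC, pack, hj0]
      have hC1 : C k (Sum.inl j) = 0 := by simp [hC, pack, hjB]
      rw [hCa, hCb, hC1, zero_smul, zero_smul, zero_smul]
      simp

  have hrep : ∀ᶠ k in atTop,
      (∑ j, ρ (φ k) • dgT (g0 j) (gh j) (x (φ k))
          (projSOC (-(g0 j (x (φ k))), -(gh j (x (φ k))))))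
        = ∑ s, C k s • D k s := by
    filter_upwards [Filter.eventually_all.mpr hjrep] with k hk
    rw [Fintype.sum_sum_type, Fintype.sum_sum_type]
    rw [Finset.sum_congr rfl (fun j _ => hk j)]
    rw [Finset.sum_add_distrib, Finset.sum_add_distrib]
    abel
  -- Caratheodory refinement
  obtain ⟨C', hC'nn, hC'supp, hC'sum, hC'li⟩ :
      ∃ C' : ℕ → TIdx q → ℝ, (∀ k s, 0 ≤ C' k s) ∧ (∀ k s, C' k s ≠ 0 → C k s ≠ 0) ∧
        (∀ k, ∑ s, C' k s • D k s = ∑ s, C k s • D k s) ∧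
        (∀ k, LinearIndependent ℝ (fun t : {s // C' k s ≠ 0} => D k t.1)) := by
    have h := fun k => caratheodory_cone (D k) (C k) (hCnn k)
    choose C' h1 h2 h3 h4 using h
    exact ⟨C', h1, h2, h3, h4⟩
  have hC'dis : ∀ k s, ¬ allowed s → C' k s = 0 := by
    intro k s hs
    by_contra h
    exact (hC'supp k s h) (hCdis k s hs)
  -- stationarity along φ with refined coefficients
  have hF : Tendsto (fun k => gradient f (x (φ k)) - ∑ s, C' k s • D k s) atTop (𝓝 0) := by
    have h1 := hstat.comp hφtend
    apply h1.congr'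
    filter_upwards [hrep] with k hk
    show gradient f (x (φ k)) - _ = _
    rw [hk, ← hC'sum k]
  -- generic limit of dictionaries
  have hDtend : ∀ (ξ : ℕ → ℕ), Tendsto ξ atTop atTop → ∀ s : TIdx q, allowed s →
      Tendsto (fun t => D (ξ t) s) atTop (𝓝 (Dbar s)) := by
    intro ξ hξ s hs
    have hxt : Tendsto (fun t => x (φ (ξ t))) atTop (𝓝 xb) := hx.comp (hφtend.comp hξ)
    have hwt : ∀ j, memI0 g0 gh xb j →
        Tendsto (fun t => w (φ (ξ t)) j) atTop (𝓝 (wb j)) := by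
      intro j hj
      refine ((hwb j hj).2).comp (tendsto_inf.mpr ⟨hφtend.comp hξ, ?_⟩)
      exact tendsto_principal.mpr (Eventually.of_forall (fun t => hφmem (ξ t)))
    rcases s with j | j | j
    · simp only [hallowed, Sum.elim_inl] at hs
      have hght : Tendsto (fun t => gh j (x (φ (ξ t)))) atTop (𝓝 (gh j xb)) :=
        ((hghcont j).tendsto xb).comp hxt
      have hu : Tendsto (fun t => unitv (gh j (x (φ (ξ t))))) atTop (𝓝 (unitv (gh j xb))) := by
        simp only [unitv]
        exact Tendsto.smul (hght.norm.inv₀ (norm_ne_zero_iff.mpr (hIBne j hs))) hght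
      exact tendsto_dgT (hg0c j) (hghc j) hxt hu.neg 1
    · simp only [hallowed, Sum.elim_inr, Sum.elim_inl] at hs
      exact tendsto_dgT (hg0c j) (hghc j) hxt (hwt j hs).neg 1
    · simp only [hallowed, Sum.elim_inr] at hs
      exact tendsto_dgT (hg0c j) (hghc j) hxt (hwt j hs) 1

  have hgradtend : ∀ (ξ : ℕ → ℕ), Tendsto ξ atTop atTop →
      Tendsto (fun t => gradient f (x (φ (ξ t)))) atTop (𝓝 (gradient f xb)) := by
    intro ξ hξ
    exact ((contGrad hf).tendsto xb).comp (hx.comp (hφtend.comp hξ))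
  -- pattern of supports
  set pat : ℕ → Finset (TIdx q) := fun k => Finset.univ.filter (fun s => C' k s ≠ 0) with hpat
  obtain ⟨P, hPinf⟩ := Finite.exists_infinite_fiber pat
  have hPinf' : (setOf (fun k => pat k = P)).Infinite := by
    rw [← Set.infinite_coe_iff] at *
    exact hPinf
  set ψ : ℕ → ℕ := Nat.nth (fun k => pat k = P) with hψdef
  have hψmono : StrictMono ψ := Nat.nth_strictMono hPinf'
  have hψP : ∀ t, pat (ψ t) = P := fun t => Nat.nth_mem_of_infinite hPinf' t
  have hψtend : Tendsto ψ atTop atTop := hψmono.tendsto_atTop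
  have hPallowed : ∀ s ∈ P, allowed s := by
    intro s hs
    rw [← hψP 0, hpat] at hs
    simp only [Finset.mem_filter] at hs
    by_contra h
    exact hs.2 (hC'dis (ψ 0) s h)
  by_cases hbdd : BddAbove (Set.range (fun t => ‖C' (ψ t)‖))
  · -- bounded case
    obtain ⟨M, hM⟩ := hbdd
    have hmem : ∀ t, C' (ψ t) ∈ Metric.closedBall (0 : TIdx q → ℝ) M := by
      intro t
      rw [Metric.mem_closedBall, dist_zero_right]
      exact hM ⟨t, rfl⟩
    obtain ⟨cb, -, τ, hτmono, hτt⟩ :=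
      tendsto_subseq_of_bounded (Metric.isBounded_closedBall) hmem
    set ξ : ℕ → ℕ := fun t => ψ (τ t) with hξdef
    have hξtend : Tendsto ξ atTop atTop := hψtend.comp hτmono.tendsto_atTop
    have hct : Tendsto (fun t => C' (ξ t)) atTop (𝓝 cb) := hτt
    have hcbnn : ∀ s, 0 ≤ cb s := fun s =>
      ge_of_tendsto' (((continuous_apply s).tendsto cb).comp hct) (fun t => hC'nn (ξ t) s)
    have hcbdis : ∀ s, ¬ allowed s → cb s = 0 := by
      intro s hs
      have h1 : Tendsto (fun t => C' (ξ t) s) atTop (𝓝 (cb s)) :=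
        ((continuous_apply s).tendsto cb).comp hct
      have h2 : (fun t => C' (ξ t) s) = fun _ => 0 := funext fun t => hC'dis (ξ t) s hs
      exact (tendsto_nhds_unique h1 (by rw [h2]; exact tendsto_const_nhds))
    have hsum : Tendsto (fun t => ∑ s, C' (ξ t) s • D (ξ t) s) atTop
        (𝓝 (∑ s, cb s • Dbar s)) := by
      apply tendsto_sum_smul hct
      intro s
      by_cases hs : allowed s
      · exact Or.inr (hDtend ξ hξtend s hs)
      · exact Or.inl (fun t => hC'dis (ξ t) s hs)
    have hsum2 : Tendsto (fun t => ∑ s, C' (ξ t) s • D (ξ t) s) atTop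
        (𝓝 (gradient f xb)) := by
      have h1 := (hgradtend ξ hξtend).sub (hF.comp hξtend)
      rw [sub_zero] at h1
      refine h1.congr fun t => ?_
      simp only [Function.comp_apply]
      abel
    have hkey : ∑ s, cb s • Dbar s = gradient f xb := tendsto_nhds_unique hsum hsum2
    refine ⟨fun j => cb (Sum.inl j) • ((1:ℝ), -unitv (gh j xb))
        + cb (Sum.inr (Sum.inl j)) • ((1:ℝ), -(wb j))
        + cb (Sum.inr (Sum.inr j)) • ((1:ℝ), wb j), ?_, ?_, ?_⟩
    · -- inSOC
      intro j
      have hnn1 := hcbnn (Sum.inl j)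
      have hnn2 := hcbnn (Sum.inr (Sum.inl j))
      have hnn3 := hcbnn (Sum.inr (Sum.inr j))
      rw [inSOC]
      simp only [Prod.smul_fst, Prod.smul_snd, Prod.fst_add, Prod.snd_add, smul_eq_mul, mul_one]
      by_cases hj0 : memI0 g0 gh xb j
      · have hz1 : cb (Sum.inl j) = 0 := hcbdis _ (by simpa [hallowed] using hdisj j hj0)
        rw [hz1, zero_smul, zero_add, zero_add]
        have heq : cb (Sum.inr (Sum.inl j)) • -(wb j) + cb (Sum.inr (Sum.inr j)) • wb j
            = (cb (Sum.inr (Sum.inr j)) - cb (Sum.inr (Sum.inl j))) • wb j := by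
          rw [smul_neg, sub_smul]
          abel
        rw [heq, norm_smul, (hwb j hj0).1, mul_one, Real.norm_eq_abs, abs_le]
        constructor <;> linarith
      · by_cases hjB : memIB g0 gh xb j
        · have hz2 : cb (Sum.inr (Sum.inl j)) = 0 := hcbdis _ (by simpa [hallowed] using hj0)
          have hz3 : cb (Sum.inr (Sum.inr j)) = 0 := hcbdis _ (by simpa [hallowed] using hj0)
          rw [hz2, hz3, zero_smul, zero_smul, add_zero, add_zero]
          rw [norm_smul, norm_neg, norm_unitv (hIBne j hjB), mul_one, Real.norm_eq_abs,
            abs_of_nonneg hnn1]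
          linarith
        · have hz1 : cb (Sum.inl j) = 0 := hcbdis _ (by simpa [hallowed] using hjB)
          have hz2 : cb (Sum.inr (Sum.inl j)) = 0 := hcbdis _ (by simpa [hallowed] using hj0)
          have hz3 : cb (Sum.inr (Sum.inr j)) = 0 := hcbdis _ (by simpa [hallowed] using hj0)
          rw [hz1, hz2, hz3]
          simp
    · -- gradient equation
      rw [← hkey]
      have hterm : ∀ j ∈ Finset.univ, dgT (g0 j) (gh j) xb
            (cb (Sum.inl j) • ((1:ℝ), -unitv (gh j xb))
              + cb (Sum.inr (Sum.inl j)) • ((1:ℝ), -(wb j))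
              + cb (Sum.inr (Sum.inr j)) • ((1:ℝ), wb j))
          = cb (Sum.inl j) • Dbar (Sum.inl j)
            + cb (Sum.inr (Sum.inl j)) • Dbar (Sum.inr (Sum.inl j))
            + cb (Sum.inr (Sum.inr j)) • Dbar (Sum.inr (Sum.inr j)) := by
        intro j _
        rw [dgT_add, dgT_add, dgT_smul, dgT_smul, dgT_smul]
        rfl
      rw [Finset.sum_congr rfl hterm]
      rw [Fintype.sum_sum_type, Fintype.sum_sum_type]
      rw [Finset.sum_add_distrib, Finset.sum_add_distrib]
      abel
    · -- complementarity
      intro j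
      simp only [pairInner, Prod.fst_add, Prod.snd_add, Prod.smul_fst, Prod.smul_snd,
        smul_eq_mul, mul_one]
      by_cases hj0 : memI0 g0 gh xb j
      · rw [hj0.1, hj0.2]
        simp
      · by_cases hjB : memIB g0 gh xb j
        · have hz2 : cb (Sum.inr (Sum.inl j)) = 0 := hcbdis _ (by simpa [hallowed] using hj0)
          have hz3 : cb (Sum.inr (Sum.inr j)) = 0 := hcbdis _ (by simpa [hallowed] using hj0)
          rw [hz2, hz3]
          simp only [zero_mul, zero_smul, add_zero]
          rw [smul_neg, inner_neg_left, real_inner_smul_left, unitv, real_inner_smul_left,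
            real_inner_self_eq_norm_mul_norm]
          have hn : ‖gh j xb‖ ≠ 0 := norm_ne_zero_iff.mpr (hIBne j hjB)
          rw [hjB.2]
          field_simp
          ring
        · have hz1 : cb (Sum.inl j) = 0 := hcbdis _ (by simpa [hallowed] using hjB)
          have hz2 : cb (Sum.inr (Sum.inl j)) = 0 := hcbdis _ (by simpa [hallowed] using hj0)
          have hz3 : cb (Sum.inr (Sum.inr j)) = 0 := hcbdis _ (by simpa [hallowed] using hj0)
          rw [hz1, hz2, hz3]
          simp

  · -- unbounded case
    obtain ⟨σ, hσmono, hσt⟩ := exists_subseq_tendsto_atTop hbdd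
    set ξ : ℕ → ℕ := fun t => ψ (σ t) with hξdef
    have hξtend : Tendsto ξ atTop atTop := hψtend.comp hσmono.tendsto_atTop
    set Nv : ℕ → ℝ := fun t => ‖C' (ξ t)‖ with hNv
    have hNt : Tendsto Nv atTop atTop := hσt
    set v : ℕ → TIdx q → ℝ := fun t => (Nv t)⁻¹ • C' (ξ t) with hv
    have hvmem : ∀ t, v t ∈ Metric.closedBall (0 : TIdx q → ℝ) 1 := by
      intro t
      rw [Metric.mem_closedBall, dist_zero_right, hv]
      rw [norm_smul, norm_inv, norm_norm]
      rcases eq_or_ne ‖C' (ξ t)‖ 0 with h | h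
      · rw [h]
        simp
      · rw [inv_mul_cancel₀ h]
    obtain ⟨lam, -, τ, hτmono, hτt⟩ :=
      tendsto_subseq_of_bounded (Metric.isBounded_closedBall) hvmem
    have hNτ : Tendsto (fun t => Nv (τ t)) atTop atTop := hNt.comp hτmono.tendsto_atTop
    have hNev : ∀ᶠ t in atTop, 0 < Nv (τ t) := hNτ.eventually_gt_atTop 0
    have hvτ : Tendsto (fun t => v (τ t)) atTop (𝓝 lam) := hτt
    -- norm of lam is 1
    have hnorm1 : ‖lam‖ = 1 := by
      have h1 : Tendsto (fun t => ‖v (τ t)‖) atTop (𝓝 ‖lam‖) := hvτ.norm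
      have h2 : (fun t => ‖v (τ t)‖) =ᶠ[atTop] (fun _ => (1:ℝ)) := by
        filter_upwards [hNev] with t ht
        rw [hv]
        rw [norm_smul, norm_inv, norm_norm]
        exact inv_mul_cancel₀ (ne_of_gt ht)
      exact tendsto_nhds_unique h1 (Tendsto.congr' h2.symm tendsto_const_nhds)
    have hlamnn : ∀ s, 0 ≤ lam s := by
      intro s
      refine ge_of_tendsto' (((continuous_apply s).tendsto lam).comp hvτ) (fun t => ?_)
      show (0:ℝ) ≤ (Nv (τ t))⁻¹ * C' (ξ (τ t)) s
      exact mul_nonneg (inv_nonneg.mpr (norm_nonneg _)) (hC'nn _ s)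
    have hpatP : ∀ t s, s ∉ P → C' (ξ t) s = 0 := by
      intro t s hs
      by_contra h
      exact hs (by rw [← hψP (σ t)]; simp [hpat, h]; exact h)
    have hlamP : ∀ s, s ∉ P → lam s = 0 := by
      intro s hs
      have h1 : Tendsto (fun t => v (τ t) s) atTop (𝓝 (lam s)) :=
        ((continuous_apply s).tendsto lam).comp hvτ
      have h2 : (fun t => v (τ t) s) = fun _ => 0 := by
        funext t
        show ((Nv (τ t))⁻¹ • C' (ξ (τ t))) s = 0
        have h1' : ((Nv (τ t))⁻¹ • C' (ξ (τ t))) s = (Nv (τ t))⁻¹ * C' (ξ (τ t)) s := rfl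
        rw [h1', hpatP (τ t) s hs, mul_zero]
      exact tendsto_nhds_unique h1 (by rw [h2]; exact tendsto_const_nhds)
    -- limit equation : ∑ lam • Dbar = 0
    have hG : Tendsto (fun t => ∑ s, C' (ξ (τ t)) s • D (ξ (τ t)) s) atTop
        (𝓝 (gradient f xb)) := by
      have hξτ : Tendsto (fun t => ξ (τ t)) atTop atTop := hξtend.comp hτmono.tendsto_atTop
      have h1 := (hgradtend _ hξτ).sub (hF.comp hξτ)
      rw [sub_zero] at h1
      refine h1.congr fun t => ?_
      simp only [Function.comp_apply]
      abel
    have hA : Tendsto (fun t => ∑ s, v (τ t) s • D (ξ (τ t)) s) atTop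
        (𝓝 (∑ s, lam s • Dbar s)) := by
      apply tendsto_sum_smul hvτ
      intro s
      by_cases hs : s ∈ P
      · exact Or.inr (hDtend (fun t => ξ (τ t)) (hξtend.comp hτmono.tendsto_atTop) s
          (hPallowed s hs))
      · refine Or.inl fun t => ?_
        show ((Nv (τ t))⁻¹ • C' (ξ (τ t))) s = 0
        have h1' : ((Nv (τ t))⁻¹ • C' (ξ (τ t))) s = (Nv (τ t))⁻¹ * C' (ξ (τ t)) s := rfl
        rw [h1', hpatP (τ t) s hs, mul_zero]
    have hB : Tendsto (fun t => ∑ s, v (τ t) s • D (ξ (τ t)) s) atTop (𝓝 0) := by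
      have heq : (fun t => ∑ s, v (τ t) s • D (ξ (τ t)) s)
          = fun t => (Nv (τ t))⁻¹ • ∑ s, C' (ξ (τ t)) s • D (ξ (τ t)) s := by
        funext t
        rw [Finset.smul_sum]
        refine Finset.sum_congr rfl fun s _ => ?_
        have h1' : v (τ t) s = (Nv (τ t))⁻¹ * C' (ξ (τ t)) s := rfl
        rw [h1', mul_smul]
      rw [heq]
      have hInv : Tendsto (fun t => (Nv (τ t))⁻¹) atTop (𝓝 0) :=
        tendsto_inv_atTop_zero.comp hNτ
      have := hInv.smul hG
      rwa [zero_smul] at this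
    have hlamsum : ∑ s, lam s • Dbar s = 0 := tendsto_nhds_unique hA hB
    -- positive linear dependence at xb
    have hpld : posLinDepD g0 gh (fun j => Sum.inl j ∈ P)
        (fun j => Sum.inr (Sum.inl j) ∈ P) (fun j => Sum.inr (Sum.inr j) ∈ P) xb wb := by
      refine ⟨fun j => lam (Sum.inl j), fun j => lam (Sum.inr (Sum.inl j)),
        fun j => lam (Sum.inr (Sum.inr j)), fun j => hlamnn _, fun j => hlamnn _,
        fun j => hlamnn _, fun j hj => hlamP _ hj, fun j hj => hlamP _ hj,
        fun j hj => hlamP _ hj, ?_, ?_⟩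
      · intro hall
        have hlz : lam = 0 := by
          funext s
          rcases s with j | j | j
          exacts [(hall j).1, (hall j).2.1, (hall j).2.2]
        rw [hlz, norm_zero] at hnorm1
        exact one_ne_zero hnorm1.symm
      · rw [famComb_eq_sum]
        have hpk : pack (fun j => lam (Sum.inl j)) (fun j => lam (Sum.inr (Sum.inl j)))
            (fun j => lam (Sum.inr (Sum.inr j))) = lam := by
          funext s
          rcases s with j | j | j <;> rfl
        rw [hpk]
        exact hlamsum
    have hev := hcp _ _ _ (fun j hj => by simpa [hallowed] using hPallowed _ hj)
      (fun j hj => by simpa [hallowed] using hPallowed _ hj)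
      (fun j hj => by simpa [hallowed] using hPallowed _ hj) hpld
    rw [Filter.eventually_inf_principal, Filter.eventually_atTop] at hev
    obtain ⟨K, hK⟩ := hev
    set k1 : ℕ := ξ (τ K) with hk1def
    have hk1K : K ≤ φ k1 := le_trans ((hψmono.comp (hσmono.comp hτmono)).le_apply)
      (hφmono.le_apply)
    obtain ⟨η, a, b, hη, ha, hb, hnt, hzero⟩ := hK (φ k1) hk1K (hφmem k1)
    set coef : TIdx q → ℝ := pack η a b with hcoef
    have hcoefP : ∀ s, s ∉ P → coef s = 0 := by
      intro s hs
      rcases s with j | j | j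
      exacts [hη j hs, ha j hs, hb j hs]
    have hzero' : ∑ s, coef s • D k1 s = 0 := by
      rw [famComb_eq_sum] at hzero
      exact hzero
    have hpatk1 : pat k1 = P := hψP (σ (τ K))
    have hsub : ∑ t : {s // C' k1 s ≠ 0}, coef t.1 • D k1 t.1 = 0 := by
      rw [← hzero']
      rw [← Finset.sum_subtype (p := fun s => C' k1 s ≠ 0)
        (Finset.univ.filter fun s => C' k1 s ≠ 0) (by intro s; simp)
        (fun s => coef s • D k1 s)]
      apply Finset.sum_subset (Finset.filter_subset _ _)
      intro s _ hs
      have hs0 : C' k1 s = 0 := by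
        by_contra h
        exact hs (by simp [h])
      have : s ∉ P := by
        rw [← hpatk1]
        simp [hpat, hs0]
      rw [hcoefP s this, zero_smul]
    have hall0 := Fintype.linearIndependent_iff.mp (hC'li k1) (fun t => coef t.1) hsub
    have hallz : ∀ s, coef s = 0 := by
      intro s
      by_cases hs : C' k1 s ≠ 0
      · exact hall0 ⟨s, hs⟩
      · push_neg at hs
        apply hcoefP
        rw [← hpatk1]
        simp [hpat, hs]
    exact absurd (fun j => ⟨hallz (Sum.inl j), hallz (Sum.inr (Sum.inl j)),
      hallz (Sum.inr (Sum.inr j))⟩) hnt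
end
end

section
/- Let x̄ ∈ F. Seq-CPLD holds at x̄ if, and only if, for every tuple of unit vectors w̄ = [w̄_j]_{j∈I_0(x̄)} there exists a neighborhood V of (x̄, w̄) such that for every J_B ⊆ I_B(x̄) and J_−, J_+ ⊆ I_0(x̄): if D_{J_B,J_−,J_+}(x̄, w̄) is positively linearly dependent, then D_{J_B,J_−,J_+}(x, w) is linearly dependent for every (x, w) ∈ V with w = [w_j]_{j∈I_0(x̄)} and ‖w_j‖ = 1 for every j ∈ J_− ∪ J_+. -/
open Filter Topology

noncomputable section

lemma unitv_norm_one {p : ℕ} {v : Evec p} (h : v ≠ 0) : ‖unitv v‖ = 1 := by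
  have hv : ‖v‖ ≠ 0 := norm_ne_zero_iff.mpr h
  rw [unitv, norm_smul, Real.norm_eq_abs, abs_inv, abs_norm, inv_mul_cancel₀ hv]

lemma unitv_of_norm_one {p : ℕ} {v : Evec p} (h : ‖v‖ = 1) : unitv v = v := by
  simp [unitv, h]

lemma unitv_smul_pos {p : ℕ} {c : ℝ} (hc : 0 < c) (v : Evec p) : unitv (c • v) = unitv v := by
  rcases eq_or_ne v 0 with rfl | hv
  · simp [unitv]
  · have hc' : c ≠ 0 := hc.ne'
    have hn : ‖v‖ ≠ 0 := norm_ne_zero_iff.mpr hv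
    have h1 : ‖c • v‖ = c * ‖v‖ := by
      rw [norm_smul, Real.norm_eq_abs, abs_of_pos hc]
    rw [unitv, unitv, h1, mul_inv, smul_smul]
    congr 1
    field_simp

lemma tendsto_inf_principal_range {α : Type*} [TopologicalSpace α] {φ : ℕ → ℕ}
    (hφ : StrictMono φ) {f : ℕ → α} {a : α} (h : Tendsto (f ∘ φ) atTop (𝓝 a)) :
    Tendsto f (atTop ⊓ 𝓟 (Set.range φ)) (𝓝 a) := by
  have hle : atTop ⊓ 𝓟 (Set.range φ) ≤ Filter.map φ atTop := by
    intro s hs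
    rw [Filter.mem_map, mem_atTop_sets] at hs
    obtain ⟨N, hN⟩ := hs
    rw [Filter.mem_inf_principal]
    refine mem_atTop_sets.mpr ⟨φ N, fun k hk hkr => ?_⟩
    obtain ⟨i, rfl⟩ := hkr
    exact hN i (hφ.le_iff_le.mp hk)
  have : Tendsto f (Filter.map φ atTop) (𝓝 a) := by rwa [Filter.tendsto_map'_iff]
  exact this.mono_left hle

lemma infPrincipal_neBot {I : Set ℕ} (hI : I.Infinite) : (atTop ⊓ 𝓟 I).NeBot := by
  rw [Filter.inf_principal_neBot_iff]
  intro U hU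
  rw [mem_atTop_sets] at hU
  obtain ⟨a, ha⟩ := hU
  obtain ⟨b, hbI, hab⟩ := hI.exists_gt a
  exact ⟨b, ha b hab.le, hbI⟩

lemma famComb_congr {n q : ℕ} {m : Fin q → ℕ} (g0 : Fin q → Evec n → ℝ)
    (gh : (j : Fin q) → Evec n → Evec (m j)) (x : Evec n)
    {w w' : (j : Fin q) → Evec (m j)} {η a b : Fin q → ℝ}
    (h : ∀ j, a j ≠ 0 ∨ b j ≠ 0 → w j = w' j) :
    famComb g0 gh x w η a b = famComb g0 gh x w' η a b := by
  unfold famComb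
  refine Finset.sum_congr rfl fun j _ => ?_
  by_cases hj : a j ≠ 0 ∨ b j ≠ 0
  · rw [h j hj]
  · push_neg at hj
    rw [hj.1, hj.2]
    simp

lemma linDepD_congr {n q : ℕ} {m : Fin q → ℕ} {g0 : Fin q → Evec n → ℝ}
    {gh : (j : Fin q) → Evec n → Evec (m j)} {JB Jm Jp : Fin q → Prop}
    {x : Evec n} {w w' : (j : Fin q) → Evec (m j)}
    (h : ∀ j, Jm j ∨ Jp j → w j = w' j) :
    linDepD g0 gh JB Jm Jp x w → linDepD g0 gh JB Jm Jp x w' := by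
  rintro ⟨η, a, b, hη, ha, hb, hnz, hzero⟩
  refine ⟨η, a, b, hη, ha, hb, hnz, ?_⟩
  rw [← hzero]
  refine (famComb_congr g0 gh x fun j hj => h j ?_).symm
  rcases hj with hj | hj
  · exact Or.inl (by_contra fun hJ => hj (ha j hJ))
  · exact Or.inr (by_contra fun hJ => hj (hb j hJ))

lemma posLinDepD_congr {n q : ℕ} {m : Fin q → ℕ} {g0 : Fin q → Evec n → ℝ}
    {gh : (j : Fin q) → Evec n → Evec (m j)} {JB Jm Jp : Fin q → Prop}
    {x : Evec n} {w w' : (j : Fin q) → Evec (m j)}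
    (h : ∀ j, Jm j ∨ Jp j → w j = w' j) :
    posLinDepD g0 gh JB Jm Jp x w → posLinDepD g0 gh JB Jm Jp x w' := by
  rintro ⟨η, a, b, hη0, ha0, hb0, hη, ha, hb, hnz, hzero⟩
  refine ⟨η, a, b, hη0, ha0, hb0, hη, ha, hb, hnz, ?_⟩
  rw [← hzero]
  refine (famComb_congr g0 gh x fun j hj => h j ?_).symm
  rcases hj with hj | hj
  · exact Or.inl (by_contra fun hJ => hj (ha j hJ))
  · exact Or.inr (by_contra fun hJ => hj (hb j hJ))


/-- Seq-CPLD holds at `xb ∈ F` iff for every tuple of unit vectors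
`wb = [wb j]_{j ∈ I₀(xb)}` there is a neighborhood `V` of `(xb, wb)` such that for every
`J_B ⊆ I_B(xb)` and `J_-, J_+ ⊆ I₀(xb)`: if `D_{J_B,J_-,J_+}(xb, wb)` is positively
linearly dependent, then `D_{J_B,J_-,J_+}(x, w)` is linearly dependent for every
`(x, w) ∈ V` with `‖w j‖ = 1` for every `j ∈ J_- ∪ J_+`. -/
theorem stmt12 {n q : ℕ} (m : Fin q → ℕ) (hm : ∀ j, 1 ≤ m j)
    (f : Evec n → ℝ) (hf : ContDiff ℝ 1 f)
    (g0 : Fin q → Evec n → ℝ) (gh : (j : Fin q) → Evec n → Evec (m j))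
    (hg : ∀ j, ContDiff ℝ 1 fun x => (g0 j x, gh j x))
    (xb : Evec n) (hxb : ∀ j, ‖gh j xb‖ ≤ g0 j xb) :
    seqCPLD g0 gh xb ↔
      ∀ wb : (j : Fin q) → Evec (m j), (∀ j, memI0 g0 gh xb j → ‖wb j‖ = 1) →
        ∃ V ∈ 𝓝 ((xb, wb) : Evec n × ((j : Fin q) → Evec (m j))),
          ∀ JB Jm Jp : Fin q → Prop,
            (∀ j, JB j → memIB g0 gh xb j) → (∀ j, Jm j → memI0 g0 gh xb j) →
            (∀ j, Jp j → memI0 g0 gh xb j) →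
            posLinDepD g0 gh JB Jm Jp xb wb →
            ∀ z ∈ V, (∀ j, (Jm j ∨ Jp j) → ‖z.2 j‖ = 1) →
              linDepD g0 gh JB Jm Jp z.1 z.2 := by
  classical
  constructor
  · -- seqCPLD → neighborhood characterization
    intro h wb hwb
    by_contra hc
    push_neg at hc
    have hc' : ∀ k : ℕ, ∃ JB Jm Jp : Fin q → Prop,
        (∀ j, JB j → memIB g0 gh xb j) ∧ (∀ j, Jm j → memI0 g0 gh xb j) ∧
        (∀ j, Jp j → memI0 g0 gh xb j) ∧ posLinDepD g0 gh JB Jm Jp xb wb ∧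
        ∃ z ∈ Metric.ball ((xb, wb) : Evec n × ((j : Fin q) → Evec (m j))) (1/(k+1)),
          (∀ j, (Jm j ∨ Jp j) → ‖z.2 j‖ = 1) ∧ ¬ linDepD g0 gh JB Jm Jp z.1 z.2 := by
      intro k
      exact hc (Metric.ball _ (1/(k+1))) (Metric.ball_mem_nhds _ (by positivity))
    choose JB Jm Jp hJB hJm hJp hpos z hzV hzu hnl using hc'
    obtain ⟨⟨B0, M0, P0⟩, hfib⟩ :=
      Finite.exists_infinite_fiber (fun k => (JB k, Jm k, Jp k))
    set S : Set ℕ := (fun k => (JB k, Jm k, Jp k)) ⁻¹' {(B0, M0, P0)} with hS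
    haveI : Infinite ↥S := hfib
    set ψ := Nat.Subtype.orderIsoOfNat S with hψ
    set φ : ℕ → ℕ := fun i => (ψ i : ℕ) with hφdef
    have hφ : StrictMono φ := fun i i' hii => by
      exact_mod_cast ψ.strictMono hii
    have hBeq : ∀ i, JB (φ i) = B0 ∧ Jm (φ i) = M0 ∧ Jp (φ i) = P0 := by
      intro i
      have hmem : φ i ∈ S := (ψ i).2
      simp only [hS, Set.mem_preimage, Set.mem_singleton_iff, Prod.mk.injEq] at hmem
      exact ⟨hmem.1, hmem.2.1, hmem.2.2⟩
    set xs : ℕ → Evec n := fun i => (z (φ i)).1 with hxsdef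
    set ws : ℕ → (j : Fin q) → Evec (m j) := fun i => (z (φ i)).2 with hwsdef
    have hdist : ∀ i : ℕ, dist (z (φ i)) ((xb, wb) : Evec n × ((j : Fin q) → Evec (m j)))
        < 1/((i:ℝ)+1) := by
      intro i
      have h1 := hzV (φ i)
      rw [Metric.mem_ball] at h1
      refine h1.trans_le ?_
      have h2 : (i:ℝ) + 1 ≤ (φ i : ℝ) + 1 := by
        have := hφ.le_apply (x := i)
        push_cast
        exact_mod_cast add_le_add_left (Nat.cast_le.mpr this) 1
      exact one_div_le_one_div_of_le (by positivity) h2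
    have hz : Tendsto (fun i => z (φ i)) atTop
        (𝓝 ((xb, wb) : Evec n × ((j : Fin q) → Evec (m j)))) := by
      rw [tendsto_iff_dist_tendsto_zero]
      exact squeeze_zero (fun i => dist_nonneg) (fun i => (hdist i).le)
        tendsto_one_div_add_atTop_nhds_zero_nat
    have hxs : Tendsto xs atTop (𝓝 xb) := (continuous_fst.tendsto _).comp hz
    have hwsT : Tendsto ws atTop (𝓝 wb) := (continuous_snd.tendsto _).comp hz
    have hws : ∀ j, Tendsto (fun i => ws i j) atTop (𝓝 (wb j)) :=
      fun j => tendsto_pi_nhds.mp hwsT j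
    set Δs : ℕ → (j : Fin q) → ℝ × Evec (m j) :=
      fun i j => if memI0 g0 gh xb j
        then ((0:ℝ), (1/((i:ℝ)+1)) • ws i j - gh j (xs i)) else 0 with hΔdef
    have hgh : ∀ j, Continuous (gh j) := fun j => continuous_snd.comp (hg j).continuous
    have hΔ0 : ∀ j, memI0 g0 gh xb j ∨ memIB g0 gh xb j →
        Tendsto (fun i => Δs i j) atTop (𝓝 0) := by
      intro j _
      by_cases hj : memI0 g0 gh xb j
      · have ha : Tendsto (fun (i:ℕ) => (1/((i:ℝ)+1)) • ws i j) atTop (𝓝 ((0:ℝ) • wb j)) :=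
          tendsto_one_div_add_atTop_nhds_zero_nat.smul (hws j)
        have hb : Tendsto (fun i => gh j (xs i)) atTop (𝓝 (gh j xb)) :=
          ((hgh j).tendsto xb).comp hxs
        rw [hj.2] at hb
        have h1 : Tendsto (fun (i:ℕ) => (1/((i:ℝ)+1)) • ws i j - gh j (xs i)) atTop
            (𝓝 (0 : Evec (m j))) := by simpa using ha.sub hb
        have heq : (fun i => Δs i j)
            = fun (i:ℕ) => ((0:ℝ), (1/((i:ℝ)+1)) • ws i j - gh j (xs i)) := by
          funext i; simp [hΔdef, if_pos hj]
        rw [heq]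
        have := Filter.Tendsto.prodMk_nhds (tendsto_const_nhds (x := (0:ℝ))) h1
        simpa [Prod.mk_zero_zero] using this
      · have heq : (fun i => Δs i j) = fun _ => (0 : ℝ × Evec (m j)) := by
          funext i; simp [hΔdef, if_neg hj]
        rw [heq]
        exact tendsto_const_nhds
    obtain ⟨I, ww, wwb, hI, ⟨hep1, hep2⟩, himp⟩ := h xs Δs hxs hΔ0
    haveI : (atTop ⊓ 𝓟 I).NeBot := infPrincipal_neBot hI
    have hB0 : ∀ j, B0 j → memIB g0 gh xb j := by
      rw [← (hBeq 0).1]; exact hJB (φ 0)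
    have hM0 : ∀ j, M0 j → memI0 g0 gh xb j := by
      rw [← (hBeq 0).2.1]; exact hJm (φ 0)
    have hP0 : ∀ j, P0 j → memI0 g0 gh xb j := by
      rw [← (hBeq 0).2.2]; exact hJp (φ 0)
    have hpos0 : posLinDepD g0 gh B0 M0 P0 xb wb := by
      rw [← (hBeq 0).1, ← (hBeq 0).2.1, ← (hBeq 0).2.2]; exact hpos (φ 0)
    have hwsu : ∀ j, (M0 j ∨ P0 j) → ∀ i : ℕ, ‖ws i j‖ = 1 := by
      intro j hj i
      have := hzu (φ i) j
      rw [(hBeq i).2.1, (hBeq i).2.2] at this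
      exact this hj
    have hI0 : ∀ j, (M0 j ∨ P0 j) → memI0 g0 gh xb j := by
      intro j hj
      rcases hj with hj | hj
      · exact hM0 j hj
      · exact hP0 j hj
    have hww : ∀ j, (M0 j ∨ P0 j) → ∀ k ∈ I, ww k j = ws k j := by
      intro j hj k hk
      have hj0 := hI0 j hj
      have hsum : gh j (xs k) + (Δs k j).2 = (1/((k:ℝ)+1)) • ws k j := by
        simp [hΔdef, if_pos hj0]
      have hwsne : ws k j ≠ 0 := by
        intro hcon
        have := hwsu j hj k
        rw [hcon] at this
        simp at this
      have hpos' : (0:ℝ) < 1/((k:ℝ)+1) := by positivity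
      have hne : gh j (xs k) + (Δs k j).2 ≠ 0 := by
        rw [hsum]
        exact smul_ne_zero hpos'.ne' hwsne
      have := (hep1 k hk j hj0).2 hne
      rw [this, hsum, unitv_smul_pos hpos', unitv_of_norm_one (hwsu j hj k)]
    have hwwb : ∀ j, (M0 j ∨ P0 j) → wwb j = wb j := by
      intro j hj
      have h1 : Tendsto (fun k => ww k j) (atTop ⊓ 𝓟 I) (𝓝 (wwb j)) :=
        (hep2 j (hI0 j hj)).2
      have h2 : Tendsto (fun k => ws k j) (atTop ⊓ 𝓟 I) (𝓝 (wb j)) :=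
        (hws j).mono_left inf_le_left
      have heqv : (fun k => ws k j) =ᶠ[atTop ⊓ 𝓟 I] (fun k => ww k j) :=
        eventually_inf_principal.mpr (Eventually.of_forall fun k hk => (hww j hj k hk).symm)
      exact tendsto_nhds_unique h1 (h2.congr' heqv)
    have hpos' : posLinDepD g0 gh B0 M0 P0 xb wwb :=
      posLinDepD_congr (fun j hj => (hwwb j hj).symm) hpos0
    have hev := himp B0 M0 P0 hB0 hM0 hP0 hpos'
    have hmemI : ∀ᶠ k in atTop ⊓ 𝓟 I, k ∈ I :=
      eventually_inf_principal.mpr (Eventually.of_forall fun k hk => hk)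
    obtain ⟨k, hld, hk⟩ := (hev.and hmemI).exists
    have hld' : linDepD g0 gh B0 M0 P0 (xs k) (ws k) :=
      linDepD_congr (fun j hj => hww j hj k hk) hld
    have hnl' := hnl (φ k)
    rw [(hBeq k).1, (hBeq k).2.1, (hBeq k).2.2] at hnl'
    exact hnl' hld'
  · -- neighborhood characterization → seqCPLD
    intro h x Δ hx hΔ
    set e : (j : Fin q) → Evec (m j) := fun j => EuclideanSpace.single ⟨0, hm j⟩ (1:ℝ) with he
    have he1 : ∀ j, ‖e j‖ = 1 := by
      intro j
      simp [he, EuclideanSpace.norm_single]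
    set wf : ℕ → (j : Fin q) → Evec (m j) :=
      fun k j => if hne : gh j (x k) + (Δ k j).2 = 0 then e j
        else unitv (gh j (x k) + (Δ k j).2) with hwfdef
    have hwf1 : ∀ k j, ‖wf k j‖ = 1 := by
      intro k j
      rcases eq_or_ne (gh j (x k) + (Δ k j).2) 0 with hh | hh
      · rw [hwfdef]; simp only [dif_pos hh]; exact he1 j
      · rw [hwfdef]; simp only [dif_neg hh]; exact unitv_norm_one hh
    have hK : IsCompact (Set.univ.pi fun j => Metric.sphere (0 : Evec (m j)) 1) :=
      isCompact_univ_pi fun j => isCompact_sphere 0 1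
    have hmem : ∀ k, wf k ∈ Set.univ.pi fun j => Metric.sphere (0 : Evec (m j)) 1 := by
      intro k j _
      simp [Metric.mem_sphere, dist_zero_right, hwf1]
    obtain ⟨wb, hwbK, φ, hφ, hconv⟩ := hK.tendsto_subseq hmem
    have hwb1 : ∀ j, ‖wb j‖ = 1 := by
      intro j
      have := hwbK j (Set.mem_univ j)
      simpa [Metric.mem_sphere, dist_zero_right] using this
    have htend : Tendsto wf (atTop ⊓ 𝓟 (Set.range φ)) (𝓝 wb) :=
      tendsto_inf_principal_range hφ hconv
    refine ⟨Set.range φ, wf, wb, Set.infinite_range_of_injective hφ.injective,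
      ⟨?_, ?_⟩, ?_⟩
    · intro k _ j _
      refine ⟨hwf1 k j, fun hne => ?_⟩
      rw [hwfdef]; simp only [dif_neg hne]
    · intro j _
      exact ⟨hwb1 j, tendsto_pi_nhds.mp htend j⟩
    · intro JBp Jmp Jpp hJB hJm hJp hpos
      obtain ⟨V, hV, hVimp⟩ := h wb (fun j _ => hwb1 j)
      have hxw : Tendsto (fun k => ((x k, wf k) : Evec n × ((j : Fin q) → Evec (m j))))
          (atTop ⊓ 𝓟 (Set.range φ)) (𝓝 (xb, wb)) := by
        rw [nhds_prod_eq]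
        exact (hx.mono_left inf_le_left).prodMk htend
      filter_upwards [hxw hV] with k hk
      exact hVimp JBp Jmp Jpp hJB hJm hJp hpos (x k, wf k) hk (fun j _ => hwf1 k j)
end
end

section
/- Let x̄ ∈ F and assume each g_j is twice differentiable in a neighborhood of x̄. For x ∈ ℝ^n, let a solution of the projection problem be a minimizer y of ‖z − x‖ over z ∈ F, and let Λ_x(y) be the set of tuples (μ_1,…,μ_q) with μ_j ∈ Λ_{m_j}, ⟨μ_j, g_j(y)⟩ = 0 for all j, and Σ_j Dg_j(y)ᵀ μ_j = v for some v ∈ ℝ^n with ‖v‖ ≤ 1 and v = (y − x)/‖y − x‖ whenever y ≠ x. If there exist τ > 0 and δ > 0 such that for every x ∈ B(x̄, δ) there is a solution y of the projection problem with Λ_x(y) ∩ cl(B(0, τ)) ≠ ∅, then MSCQ holds at x̄. -/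
open Filter Topology

noncomputable section

section Stmt14Helpers

lemma pairSq_nonneg' {p : ℕ} (u : ℝ × Evec p) : 0 ≤ pairSq u := by
  unfold pairSq; positivity

lemma sqrt_pairSq_le_tau {p : ℕ} (u : ℝ × Evec p) {t : ℝ} (ht : 0 ≤ t)
    (h : pairSq u ≤ t ^ 2) : Real.sqrt (pairSq u) ≤ t := by
  calc Real.sqrt (pairSq u) ≤ Real.sqrt (t ^ 2) := Real.sqrt_le_sqrt h
  _ = t := Real.sqrt_sq ht

lemma sqrt_pairSq_prod_le {p : ℕ} (u : ℝ × Evec p) :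
    Real.sqrt (pairSq u) ≤ Real.sqrt 2 * ‖u‖ := by
  have h1 : |u.1| ≤ ‖u‖ := by simpa [Real.norm_eq_abs] using norm_fst_le u
  have h2 : ‖u.2‖ ≤ ‖u‖ := norm_snd_le u
  have h3 : pairSq u ≤ 2 * ‖u‖ ^ 2 := by
    unfold pairSq
    nlinarith [sq_abs u.1, norm_nonneg u, norm_nonneg u.2, abs_nonneg u.1]
  calc Real.sqrt (pairSq u) ≤ Real.sqrt (2 * ‖u‖ ^ 2) := Real.sqrt_le_sqrt h3
  _ = Real.sqrt 2 * ‖u‖ := by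
      rw [Real.sqrt_mul (by norm_num), Real.sqrt_sq (norm_nonneg _)]

lemma abs_pairInner_le {p : ℕ} (u w : ℝ × Evec p) :
    |pairInner u w| ≤ Real.sqrt (pairSq u) * Real.sqrt (pairSq w) := by
  have h1 : |pairInner u w| ≤ |u.1| * |w.1| + ‖u.2‖ * ‖w.2‖ := by
    calc |pairInner u w| ≤ |u.1 * w.1| + |(inner ℝ u.2 w.2 : ℝ)| := abs_add_le _ _
    _ ≤ |u.1| * |w.1| + ‖u.2‖ * ‖w.2‖ := by
        rw [abs_mul]; gcongr; exact abs_real_inner_le_norm _ _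
  refine h1.trans ?_
  have h2 : (|u.1| * |w.1| + ‖u.2‖ * ‖w.2‖) ^ 2 ≤ pairSq u * pairSq w := by
    simp only [pairSq]
    nlinarith [sq_nonneg (|u.1| * ‖w.2‖ - |w.1| * ‖u.2‖), abs_nonneg u.1, abs_nonneg w.1,
      norm_nonneg u.2, norm_nonneg w.2, sq_abs u.1, sq_abs w.1]
  calc |u.1| * |w.1| + ‖u.2‖ * ‖w.2‖
      = Real.sqrt ((|u.1| * |w.1| + ‖u.2‖ * ‖w.2‖) ^ 2) := (Real.sqrt_sq (by positivity)).symm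
  _ ≤ Real.sqrt (pairSq u * pairSq w) := Real.sqrt_le_sqrt h2
  _ = _ := Real.sqrt_mul (pairSq_nonneg' u) _

lemma pairInner_nonneg' {p : ℕ} {u w : ℝ × Evec p} (hu : inSOC u) (hw : inSOC w) :
    0 ≤ pairInner u w := by
  have h1 := abs_real_inner_le_norm u.2 w.2
  have h2 := abs_nonneg (inner ℝ u.2 w.2 : ℝ)
  unfold inSOC at hu hw
  unfold pairInner
  nlinarith [neg_abs_le (inner ℝ u.2 w.2 : ℝ), norm_nonneg u.2, norm_nonneg w.2]

lemma pairInner_sub_right' {p : ℕ} (u a b : ℝ × Evec p) :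
    pairInner u (a - b) = pairInner u a - pairInner u b := by
  simp only [pairInner, Prod.fst_sub, Prod.snd_sub, inner_sub_right]; ring

lemma pairInner_add_right' {p : ℕ} (u a b : ℝ × Evec p) :
    pairInner u (a + b) = pairInner u a + pairInner u b := by
  simp only [pairInner, Prod.fst_add, Prod.snd_add, inner_add_right]; ring

lemma sum_le_sqrt_mul_sqrt' {q : ℕ} (f g : Fin q → ℝ) (hf : ∀ i, 0 ≤ f i)
    (hg : ∀ i, 0 ≤ g i) :
    ∑ i, f i * g i ≤ Real.sqrt (∑ i, f i ^ 2) * Real.sqrt (∑ i, g i ^ 2) := by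
  have h := Finset.sum_mul_sq_le_sq_mul_sq Finset.univ f g
  have h0 : 0 ≤ ∑ i, f i * g i := Finset.sum_nonneg fun i _ => mul_nonneg (hf i) (hg i)
  calc ∑ i, f i * g i = Real.sqrt ((∑ i, f i * g i) ^ 2) := (Real.sqrt_sq h0).symm
  _ ≤ Real.sqrt ((∑ i, f i ^ 2) * ∑ i, g i ^ 2) := Real.sqrt_le_sqrt h
  _ = _ := Real.sqrt_mul (Finset.sum_nonneg fun i _ => sq_nonneg _) _

lemma inner_gradient_apply' {k : ℕ} (f : Evec k → ℝ) (x h : Evec k) :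
    (inner ℝ (gradient f x) h : ℝ) = fderiv ℝ f x h :=
  InnerProductSpace.toDual_symm_apply

lemma inner_dgT_eq {k p : ℕ} (g0 : Evec k → ℝ) (gh : Evec k → Evec p)
    (hG : ContDiff ℝ 1 fun x => (g0 x, gh x)) (y h : Evec k) (u : ℝ × Evec p) :
    (inner ℝ (dgT g0 gh y u) h : ℝ)
      = pairInner u (fderiv ℝ (fun x => (g0 x, gh x)) y h) := by
  set A := fderiv ℝ (fun x => (g0 x, gh x)) y with hAdef
  have hA : HasFDerivAt (fun x => (g0 x, gh x)) A y :=
    (hG.differentiable one_ne_zero y).hasFDerivAt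
  have h0 : fderiv ℝ g0 y = (ContinuousLinearMap.fst ℝ ℝ (Evec p)).comp A := hA.fst.fderiv
  have hi : ∀ i, fderiv ℝ (fun x => gh x i) y
      = (EuclideanSpace.proj i).comp ((ContinuousLinearMap.snd ℝ ℝ (Evec p)).comp A) := by
    intro i
    have h2 : HasFDerivAt (fun x => gh x i)
        ((EuclideanSpace.proj (𝕜 := ℝ) i).comp
          ((ContinuousLinearMap.snd ℝ ℝ (Evec p)).comp A)) y :=
      ((EuclideanSpace.proj (𝕜 := ℝ) i).hasFDerivAt).comp y hA.snd
    exact h2.fderiv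
  have hg0 : (inner ℝ (gradient g0 y) h : ℝ) = (A h).1 := by
    rw [inner_gradient_apply', h0]; rfl
  have hgh : ∀ i, (inner ℝ (gradient (fun x => gh x i) y) h : ℝ) = (A h).2 i := by
    intro i; rw [inner_gradient_apply', hi i]; rfl
  simp only [dgT, inner_add_left, sum_inner, real_inner_smul_left, hg0, hgh]
  simp [pairInner, PiLp.inner_apply, RCLike.inner_apply, conj_trivial, mul_comm]

end Stmt14Helpers

set_option maxHeartbeats 1000000 in
/-- Suppose each `g_j` is twice differentiable near `xb ∈ F`, and there
are `τ, δ > 0` such that for every `x` with `‖x - xb‖ < δ` there is a solution `y` of the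
projection problem (a minimizer of `‖z - x‖` over `z ∈ F`) together with a Lagrange
multiplier tuple `μ ∈ Λ_x(y)` with `‖μ‖ ≤ τ`.  Then MSCQ holds at `xb`. -/
theorem stmt14 {n q : ℕ} (m : Fin q → ℕ) (hm : ∀ j, 1 ≤ m j)
    (f : Evec n → ℝ) (hf : ContDiff ℝ 1 f)
    (g0 : Fin q → Evec n → ℝ) (gh : (j : Fin q) → Evec n → Evec (m j))
    (hg : ∀ j, ContDiff ℝ 1 fun x => (g0 j x, gh j x))
    (xb : Evec n) (hxb : ∀ j, ‖gh j xb‖ ≤ g0 j xb)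
    (hg2 : ∀ j, ∀ᶠ y in 𝓝 xb, ContDiffAt ℝ 2 (fun x => (g0 j x, gh j x)) y)
    (τ δ : ℝ) (hτ : 0 < τ) (hδ : 0 < δ)
    (hproj : ∀ x : Evec n, ‖x - xb‖ < δ →
      ∃ y : Evec n,
        (∀ j, ‖gh j y‖ ≤ g0 j y) ∧
        (∀ z : Evec n, (∀ j, ‖gh j z‖ ≤ g0 j z) → ‖y - x‖ ≤ ‖z - x‖) ∧
        ∃ μ : (j : Fin q) → ℝ × Evec (m j),
          (∀ j, inSOC (μ j)) ∧
          (∀ j, pairInner (μ j) (g0 j y, gh j y) = 0) ∧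
          (∃ v : Evec n, ‖v‖ ≤ 1 ∧ (y ≠ x → v = ‖y - x‖⁻¹ • (y - x)) ∧
            ∑ j, dgT (g0 j) (gh j) y (μ j) = v) ∧
          ∑ j, pairSq (μ j) ≤ τ ^ 2) :
    MSCQat g0 gh xb := by
  classical
  -- the constant controlling the Taylor remainder
  set c : ℝ := (4 * ((q : ℝ) + 1) * τ)⁻¹ with hc
  have hcpos : 0 < c := by rw [hc]; positivity
  -- a radius on which all the derivatives stay `c/2`-close to their value at `xb`
  have hev : ∀ᶠ t in 𝓝 xb, ∀ j : Fin q,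
      ‖fderiv ℝ (fun z => (g0 j z, gh j z)) t
        - fderiv ℝ (fun z => (g0 j z, gh j z)) xb‖ ≤ c / 2 := by
    rw [eventually_all]
    intro j
    have hcont : ContinuousAt (fun t => fderiv ℝ (fun z => (g0 j z, gh j z)) t) xb :=
      ((hg j).continuous_fderiv one_ne_zero).continuousAt
    have hmem := hcont.preimage_mem_nhds
      (Metric.closedBall_mem_nhds (fderiv ℝ (fun z => (g0 j z, gh j z)) xb)
        (half_pos hcpos))
    filter_upwards [hmem] with t ht
    simpa [Metric.mem_closedBall, dist_eq_norm] using ht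
  obtain ⟨ρ₀, hρ₀pos, hρ₀⟩ := Metric.eventually_nhds_iff.1 hev
  set ρ : ℝ := ρ₀ / 2 with hρdef
  have hρpos : 0 < ρ := by positivity
  have hρ : ∀ j : Fin q, ∀ t ∈ Metric.closedBall xb ρ,
      ‖fderiv ℝ (fun z => (g0 j z, gh j z)) t
        - fderiv ℝ (fun z => (g0 j z, gh j z)) xb‖ ≤ c / 2 := by
    intro j t ht
    have : dist t xb < ρ₀ := lt_of_le_of_lt (Metric.mem_closedBall.1 ht) (by linarith)
    exact hρ₀ this j
  -- the neighborhood radius and the final constant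
  refine ⟨2 * τ, by positivity, min δ (ρ / 2), lt_min hδ (by positivity), ?_⟩
  intro x hx
  have hxδ : ‖x - xb‖ < δ := lt_of_lt_of_le hx (min_le_left _ _)
  have hxρ : ‖x - xb‖ < ρ / 2 := lt_of_lt_of_le hx (min_le_right _ _)
  obtain ⟨y, hyF, hymin, μ, hμSOC, hcomp, ⟨v, hv1, hvdir, hvsum⟩, hμτ⟩ := hproj x hxδ
  -- notation for the target set of distances
  set S : Set ℝ := {d : ℝ | ∃ z : (j : Fin q) → ℝ × Evec (m j),
      (∀ j, inSOC (z j)) ∧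
      d = Real.sqrt (∑ j, ((g0 j x - (z j).1) ^ 2 + ‖gh j x - (z j).2‖ ^ 2))} with hSdef
  have hSne : S.Nonempty := by
    refine ⟨_, ⟨fun _ => 0, fun j => by simp [inSOC], rfl⟩⟩
  have hS0 : 0 ≤ sInf S := by
    apply Real.sInf_nonneg
    rintro d ⟨z, _, rfl⟩
    positivity
  have hyx : ‖y - x‖ ≤ ‖x - xb‖ := by
    have h := hymin xb hxb
    rwa [show xb - x = -(x - xb) by abel, norm_neg] at h
  have hinf : Metric.infDist x {z : Evec n | ∀ j, ‖gh j z‖ ≤ g0 j z} ≤ ‖y - x‖ := by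
    have := Metric.infDist_le_dist_of_mem (x := x)
      (s := {z : Evec n | ∀ j, ‖gh j z‖ ≤ g0 j z}) hyF
    rwa [dist_eq_norm, norm_sub_rev] at this
  by_cases hyne : y = x
  · subst hyne
    simp only [sub_self, norm_zero] at hinf ⊢
    calc Metric.infDist y {z : Evec n | ∀ j, ‖gh j z‖ ≤ g0 j z} ≤ 0 := by simpa using hinf
    _ ≤ 2 * τ * sInf S := by positivity
  -- the nontrivial case `y ≠ x`
  have hyx0 : ‖y - x‖ ≠ 0 := norm_ne_zero_iff.2 (sub_ne_zero.2 hyne)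
  have hyball : y ∈ Metric.closedBall xb ρ := by
    rw [Metric.mem_closedBall, dist_eq_norm]
    calc ‖y - xb‖ ≤ ‖y - x‖ + ‖x - xb‖ := norm_sub_le_norm_sub_add_norm_sub _ _ _
    _ ≤ ‖x - xb‖ + ‖x - xb‖ := by linarith
    _ ≤ ρ := by linarith
  have hxball : x ∈ Metric.closedBall xb ρ := by
    rw [Metric.mem_closedBall, dist_eq_norm]; linarith
  -- the per-`j` multiplier bound
  have hμle : ∀ j, Real.sqrt (pairSq (μ j)) ≤ τ := by
    intro j
    refine sqrt_pairSq_le_tau _ hτ.le (le_trans ?_ hμτ)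
    exact Finset.single_le_sum (f := fun j => pairSq (μ j))
      (fun i _ => pairSq_nonneg' _) (Finset.mem_univ j)
  have hμles : Real.sqrt (∑ j, pairSq (μ j)) ≤ τ := by
    calc Real.sqrt (∑ j, pairSq (μ j)) ≤ Real.sqrt (τ ^ 2) := Real.sqrt_le_sqrt hμτ
    _ = τ := Real.sqrt_sq hτ.le
  -- key identity : ‖y - x‖ as the sum of `pairInner`s of derivatives
  have hsumv : (inner ℝ v (y - x) : ℝ) = ‖y - x‖ := by
    rw [hvdir hyne, real_inner_smul_left, real_inner_self_eq_norm_sq, pow_two,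
      ← mul_assoc, inv_mul_cancel₀ hyx0, one_mul]
  have key1 : ‖y - x‖
      = ∑ j, pairInner (μ j) (fderiv ℝ (fun z => (g0 j z, gh j z)) y (y - x)) := by
    rw [← hsumv, ← hvsum, sum_inner]
    exact Finset.sum_congr rfl fun j _ => inner_dgT_eq _ _ (hg j) _ _ _
  -- the Taylor remainders
  set R : (j : Fin q) → ℝ × Evec (m j) := fun j =>
    fderiv ℝ (fun z => (g0 j z, gh j z)) y (y - x)
      - ((g0 j y, gh j y) - (g0 j x, gh j x)) with hRdef
  have hRle : ∀ j, ‖R j‖ ≤ c * ‖y - x‖ := by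
    intro j
    set B := fderiv ℝ (fun z => (g0 j z, gh j z)) y with hBdef
    have hmvt := Convex.norm_image_sub_le_of_norm_hasFDerivWithin_le
      (f := fun t => (g0 j t, gh j t) - B t)
      (f' := fun t => fderiv ℝ (fun z => (g0 j z, gh j z)) t - B)
      (s := Metric.closedBall xb ρ) (C := c)
      (fun t _ => (((hg j).differentiable one_ne_zero t).hasFDerivAt.sub
        B.hasFDerivAt).hasFDerivWithinAt)
      (fun t ht => by
        show ‖fderiv ℝ (fun z => (g0 j z, gh j z)) t - B‖ ≤ c
        have e1 : fderiv ℝ (fun z => (g0 j z, gh j z)) t - B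
            = (fderiv ℝ (fun z => (g0 j z, gh j z)) t
                - fderiv ℝ (fun z => (g0 j z, gh j z)) xb)
              + (fderiv ℝ (fun z => (g0 j z, gh j z)) xb - B) := by abel
        rw [e1]
        calc ‖_ + _‖ ≤ _ + _ := norm_add_le _ _
        _ ≤ c / 2 + c / 2 := by
            gcongr
            · exact hρ j t ht
            · rw [norm_sub_rev]; exact hρ j y hyball
        _ = c := by ring)
      (convex_closedBall xb ρ) hyball hxball
    have hRfx : R j = ((g0 j x, gh j x) - B x) - ((g0 j y, gh j y) - B y) := by
      rw [hRdef]
      simp only [map_sub]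
      abel
    calc ‖R j‖ = ‖((g0 j x, gh j x) - B x) - ((g0 j y, gh j y) - B y)‖ := by rw [hRfx]
    _ ≤ c * ‖x - y‖ := hmvt
    _ = c * ‖y - x‖ := by rw [norm_sub_rev]
  -- decompose each derivative term
  have key2 : ‖y - x‖
      = -(∑ j, pairInner (μ j) (g0 j x, gh j x)) + ∑ j, pairInner (μ j) (R j) := by
    rw [key1]
    have hstep : ∀ j : Fin q,
        pairInner (μ j) (fderiv ℝ (fun z => (g0 j z, gh j z)) y (y - x))
          = -pairInner (μ j) (g0 j x, gh j x) + pairInner (μ j) (R j) := by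
      intro j
      have harg : fderiv ℝ (fun z => (g0 j z, gh j z)) y (y - x)
          = ((g0 j y, gh j y) - (g0 j x, gh j x)) + R j := by
        rw [hRdef]; simp
      rw [harg, pairInner_add_right', pairInner_sub_right', hcomp j]
      ring
    rw [Finset.sum_congr rfl fun j _ => hstep j, Finset.sum_add_distrib,
      Finset.sum_neg_distrib]
  -- bound the linear term by `τ * sInf S`
  have bound1 : -(∑ j, pairInner (μ j) (g0 j x, gh j x)) ≤ τ * sInf S := by
    have hlow : ∀ d ∈ S, (-(∑ j, pairInner (μ j) (g0 j x, gh j x))) / τ ≤ d := by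
      rintro d ⟨z, hz, rfl⟩
      rw [div_le_iff₀ hτ]
      have h1 : -(∑ j, pairInner (μ j) (g0 j x, gh j x))
          ≤ ∑ j, pairInner (μ j) (z j - (g0 j x, gh j x)) := by
        have e : ∑ j, pairInner (μ j) (z j - (g0 j x, gh j x))
            = ∑ j, pairInner (μ j) (z j) - ∑ j, pairInner (μ j) (g0 j x, gh j x) := by
          rw [← Finset.sum_sub_distrib]
          exact Finset.sum_congr rfl fun j _ => pairInner_sub_right' _ _ _
        have h0 : 0 ≤ ∑ j, pairInner (μ j) (z j) :=
          Finset.sum_nonneg fun j _ => pairInner_nonneg' (hμSOC j) (hz j)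
        rw [e]; linarith
      have h2 : ∑ j, pairInner (μ j) (z j - (g0 j x, gh j x))
          ≤ Real.sqrt (∑ j, pairSq (μ j))
            * Real.sqrt (∑ j, pairSq (z j - (g0 j x, gh j x))) := by
        calc ∑ j, pairInner (μ j) (z j - (g0 j x, gh j x))
            ≤ ∑ j, Real.sqrt (pairSq (μ j))
                * Real.sqrt (pairSq (z j - (g0 j x, gh j x))) :=
              Finset.sum_le_sum fun j _ =>
                (le_abs_self _).trans (abs_pairInner_le _ _)
        _ ≤ Real.sqrt (∑ j, Real.sqrt (pairSq (μ j)) ^ 2)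
              * Real.sqrt (∑ j, Real.sqrt (pairSq (z j - (g0 j x, gh j x))) ^ 2) :=
            sum_le_sqrt_mul_sqrt' _ _ (fun i => Real.sqrt_nonneg _)
              (fun i => Real.sqrt_nonneg _)
        _ = _ := by
            congr 1 <;> refine congrArg Real.sqrt ?_ <;>
              exact Finset.sum_congr rfl fun j _ => Real.sq_sqrt (pairSq_nonneg' _)
      have h3 : ∑ j, pairSq (z j - (g0 j x, gh j x))
          = ∑ j, ((g0 j x - (z j).1) ^ 2 + ‖gh j x - (z j).2‖ ^ 2) := by
        refine Finset.sum_congr rfl fun j _ => ?_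
        simp only [pairSq, Prod.fst_sub, Prod.snd_sub]
        rw [norm_sub_rev]
        ring_nf
      have h4 : 0 ≤ Real.sqrt (∑ j, ((g0 j x - (z j).1) ^ 2 + ‖gh j x - (z j).2‖ ^ 2)) :=
        Real.sqrt_nonneg _
      calc -(∑ j, pairInner (μ j) (g0 j x, gh j x))
          ≤ Real.sqrt (∑ j, pairSq (μ j))
            * Real.sqrt (∑ j, pairSq (z j - (g0 j x, gh j x))) := h1.trans h2
      _ = Real.sqrt (∑ j, pairSq (μ j))
            * Real.sqrt (∑ j, ((g0 j x - (z j).1) ^ 2 + ‖gh j x - (z j).2‖ ^ 2)) := by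
          rw [h3]
      _ ≤ τ * Real.sqrt (∑ j, ((g0 j x - (z j).1) ^ 2 + ‖gh j x - (z j).2‖ ^ 2)) := by
          exact mul_le_mul_of_nonneg_right hμles h4
      _ = Real.sqrt (∑ j, ((g0 j x - (z j).1) ^ 2 + ‖gh j x - (z j).2‖ ^ 2)) * τ := by ring
    have hcs := le_csInf hSne hlow
    have := (div_le_iff₀ hτ).1 hcs
    linarith
  -- bound the remainder term
  have bound2 : ∑ j, pairInner (μ j) (R j) ≤ 1 / 2 * ‖y - x‖ := by
    have hterm : ∀ j : Fin q, pairInner (μ j) (R j)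
        ≤ τ * (Real.sqrt 2 * (c * ‖y - x‖)) := by
      intro j
      have h1 : pairInner (μ j) (R j)
          ≤ Real.sqrt (pairSq (μ j)) * Real.sqrt (pairSq (R j)) :=
        (le_abs_self _).trans (abs_pairInner_le _ _)
      have h2 : Real.sqrt (pairSq (R j)) ≤ Real.sqrt 2 * (c * ‖y - x‖) := by
        calc Real.sqrt (pairSq (R j)) ≤ Real.sqrt 2 * ‖R j‖ := sqrt_pairSq_prod_le _
        _ ≤ Real.sqrt 2 * (c * ‖y - x‖) :=
            mul_le_mul_of_nonneg_left (hRle j) (Real.sqrt_nonneg 2)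
      calc pairInner (μ j) (R j)
          ≤ Real.sqrt (pairSq (μ j)) * Real.sqrt (pairSq (R j)) := h1
      _ ≤ τ * (Real.sqrt 2 * (c * ‖y - x‖)) := by
          apply mul_le_mul (hμle j) h2 (Real.sqrt_nonneg _) hτ.le
    have hsum : ∑ j, pairInner (μ j) (R j)
        ≤ (q : ℝ) * (τ * (Real.sqrt 2 * (c * ‖y - x‖))) := by
      calc ∑ j, pairInner (μ j) (R j)
          ≤ ∑ _j : Fin q, τ * (Real.sqrt 2 * (c * ‖y - x‖)) :=
          Finset.sum_le_sum fun j _ => hterm j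
      _ = (q : ℝ) * (τ * (Real.sqrt 2 * (c * ‖y - x‖))) := by
          rw [Finset.sum_const, Finset.card_univ, Fintype.card_fin, nsmul_eq_mul]
    refine hsum.trans ?_
    have hsqrt2 : Real.sqrt 2 ≤ 2 := by
      nlinarith [Real.sq_sqrt (by norm_num : (0:ℝ) ≤ 2), Real.sqrt_nonneg 2]
    have e1 : (q : ℝ) * (τ * (Real.sqrt 2 * (c * ‖y - x‖)))
        = ((q : ℝ) * Real.sqrt 2 / (4 * ((q : ℝ) + 1))) * ‖y - x‖ := by
      rw [hc]
      field_simp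
    rw [e1]
    apply mul_le_mul_of_nonneg_right _ (norm_nonneg _)
    rw [div_le_iff₀ (by positivity)]
    nlinarith [Real.sqrt_nonneg 2, (Nat.cast_nonneg q : (0:ℝ) ≤ (q:ℝ))]
  -- conclude
  have hfin : ‖y - x‖ ≤ 2 * τ * sInf S := by
    have := key2
    nlinarith [bound1, bound2]
  calc Metric.infDist x {z : Evec n | ∀ j, ‖gh j z‖ ≤ g0 j z} ≤ ‖y - x‖ := hinf
  _ ≤ 2 * τ * sInf S := hfin
end
end
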